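/- arXiv:2307.03087 — 4 statements merged into one kernel-verified Lean document; each statement's English description precedes it below -/
import Mathlib

section
/- Let α ∈ (0,1], q ∈ (1,∞), μ < q−1, and T ∈ (0,∞]. Then there is a constant N = N(α,q,μ) > 0 such that for every measurable function f : (0,T) → ℝ, ∫₀ᵀ |t^{−α} I^α f(t)|^q t^μ dt ≤ N ∫₀ᵀ |f(t)|^q t^μ dt, where I^α f(t) = (1/Γ(α)) ∫₀ᵗ (t−s)^{α−1} f(s) ds. -/
/-!
Substituting `s = t u` gives `t^{-α} I^α f(t) = Γ(α)⁻¹ ∫₀¹ (1 - u)^{α-1} f(t u) du`, an average of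
dilates of `f`. Hölder's inequality with the weight `u^{-a}`, Tonelli, and the dilation identity
`∫₀^∞ |f(u t)|^q t^μ dt = u^{-μ-1} ∫₀^∞ |f(t)|^q t^μ dt` bound the left side by the right side
times `Γ(α)^{-q} B₁^{q-1} B₂`, where `B₁ = ∫₀¹ (1 - u)^{α-1} u^{-a} du` and
`B₂ = ∫₀¹ (1 - u)^{α-1} u^{a(q-1)-μ-1} du`. Both Beta integrals are finite as soon as
`μ / (q - 1) < a < 1`, and such an `a` exists because `μ < q - 1`. For `T < ∞` apply this to `f`
truncated to `(0, T)`: `I^α f(t)` only sees `f` on `(0, t)`.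
-/

open MeasureTheory Set ENNReal

theorem lintegral_rpow_le_lintegral_mul_lintegral_rpow {X : Type*} [MeasurableSpace X]
    {ν : Measure X} {q : ℝ} (hq : 1 < q) {v F : X → ℝ≥0∞} (hv : AEMeasurable v ν)
    (hF : AEMeasurable F ν) (hv0 : ∀ᵐ x ∂ν, v x ≠ 0) (hvt : ∀ᵐ x ∂ν, v x ≠ ⊤) :
    (∫⁻ x, F x ∂ν) ^ q ≤ (∫⁻ x, v x ∂ν) ^ (q - 1) * ∫⁻ x, v x ^ (1 - q) * F x ^ q ∂ν := by
  have hq0 : 0 < q := by linarith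
  set p := q / (q - 1)
  have hpq : p.HolderConjugate q := (Real.HolderConjugate.conjExponent hq).symm
  have hsplit : ∀ᵐ x ∂ν, F x = v x ^ (1 / p) * (v x ^ (1 - q) * F x ^ q) ^ (1 / q) := by
    filter_upwards [hv0, hvt] with x h0 ht
    rw [ENNReal.mul_rpow_of_nonneg _ _ (by positivity), ← ENNReal.rpow_mul, ← ENNReal.rpow_mul,
      mul_one_div_cancel hq0.ne', ENNReal.rpow_one, ← mul_assoc, ← ENNReal.rpow_add _ _ h0 ht]
    have : 1 / p + (1 - q) * (1 / q) = 0 := by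
      simp only [p]; field_simp; ring
    rw [this, ENNReal.rpow_zero, one_mul]
  calc (∫⁻ x, F x ∂ν) ^ q
      = (∫⁻ x, v x ^ (1 / p) * (v x ^ (1 - q) * F x ^ q) ^ (1 / q) ∂ν) ^ q := by
        rw [lintegral_congr_ae hsplit]
    _ ≤ ((∫⁻ x, v x ∂ν) ^ (1 / p) * (∫⁻ x, v x ^ (1 - q) * F x ^ q ∂ν) ^ (1 / q)) ^ q := by
        gcongr
        have hHolder := ENNReal.lintegral_mul_le_Lp_mul_Lq ν hpq (hv.pow_const (1 / p))
          (((hv.pow_const (1 - q)).mul (hF.pow_const q)).pow_const (1 / q))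
        simp only [Pi.mul_apply, ← ENNReal.rpow_mul, one_div_mul_cancel hpq.ne_zero,
          one_div_mul_cancel hq0.ne', ENNReal.rpow_one] at hHolder
        exact hHolder
    _ = (∫⁻ x, v x ∂ν) ^ (q - 1) * ∫⁻ x, v x ^ (1 - q) * F x ^ q ∂ν := by
        rw [ENNReal.mul_rpow_of_nonneg _ _ hq0.le, ← ENNReal.rpow_mul, ← ENNReal.rpow_mul,
          one_div_mul_cancel hq0.ne', ENNReal.rpow_one]
        congr 2
        simp only [p]; field_simp

theorem lintegral_image_const_mul {s : Set ℝ} (hs : MeasurableSet s) {c : ℝ} (hc : 0 < c)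
    (g : ℝ → ℝ≥0∞) :
    ∫⁻ x in (c * ·) '' s, g x = ENNReal.ofReal c * ∫⁻ u in s, g (c * u) := by
  rw [lintegral_image_eq_lintegral_abs_deriv_mul hs (f := (c * ·)) (f' := fun _ => c)
    (fun u _ => ((hasDerivAt_id u).const_mul c).hasDerivWithinAt.congr_deriv (mul_one c))
    (mul_right_injective₀ hc.ne').injOn, abs_of_pos hc, lintegral_const_mul' _ _ ofReal_ne_top]

theorem lintegral_Ioo_zero_eq_mul_lintegral_comp_mul {t : ℝ} (ht : 0 < t) (g : ℝ → ℝ≥0∞) :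
    ∫⁻ s in Ioo 0 t, g s = ENNReal.ofReal t * ∫⁻ u in Ioo 0 1, g (t * u) := by
  rw [← lintegral_image_const_mul measurableSet_Ioo ht, image_mul_left_Ioo ht, mul_zero, mul_one]

theorem lintegral_Ioi_comp_mul_mul_rpow {c : ℝ} (hc : 0 < c) (μ : ℝ) (g : ℝ → ℝ≥0∞) :
    ∫⁻ t in Ioi 0, g (c * t) * ENNReal.ofReal (t ^ μ)
      = ENNReal.ofReal (c ^ (-(μ + 1))) * ∫⁻ t in Ioi 0, g t * ENNReal.ofReal (t ^ μ) := by
  have hsubst := lintegral_image_const_mul (measurableSet_Ioi (a := 0)) hc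
    fun t => g t * ENNReal.ofReal (t ^ μ)
  rw [image_mul_left_Ioi hc, mul_zero] at hsubst
  rw [hsubst, ← mul_assoc, ← ENNReal.ofReal_mul (by positivity),
    ← lintegral_const_mul' _ _ ofReal_ne_top]
  refine setLIntegral_congr_fun measurableSet_Ioi fun t ht => ?_
  have hpow : c ^ (-(μ + 1)) * c * (c * t) ^ μ = t ^ μ := by
    rw [Real.mul_rpow hc.le (le_of_lt ht), ← mul_assoc, ← Real.rpow_add_one hc.ne',
      ← Real.rpow_add hc]
    norm_num
  rw [← hpow, ENNReal.ofReal_mul (by positivity), ENNReal.ofReal_mul (by positivity)]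
  ring

theorem lintegral_rpow_lintegral_comp_mul_le {ρ : Measure ℝ} [SFinite ρ] (hρ : ∀ᵐ u ∂ρ, 0 < u)
    {q : ℝ} (hq : 1 < q) (a μ : ℝ) {F : ℝ → ℝ≥0∞} (hF : Measurable F) :
    ∫⁻ t in Ioi 0, (∫⁻ u, F (t * u) ∂ρ) ^ q * ENNReal.ofReal (t ^ μ)
      ≤ (∫⁻ u, ENNReal.ofReal (u ^ (-a)) ∂ρ) ^ (q - 1)
        * (∫⁻ u, ENNReal.ofReal (u ^ (a * (q - 1) - (μ + 1))) ∂ρ)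
        * ∫⁻ t in Ioi 0, F t ^ q * ENNReal.ofReal (t ^ μ) := by
  set C := (∫⁻ u, ENNReal.ofReal (u ^ (-a)) ∂ρ) ^ (q - 1)
  have hHolder : ∀ t, (∫⁻ u, F (t * u) ∂ρ) ^ q
      ≤ C * ∫⁻ u, ENNReal.ofReal (u ^ (a * (q - 1))) * F (t * u) ^ q ∂ρ := by
    intro t
    refine (lintegral_rpow_le_lintegral_mul_lintegral_rpow hq
      (v := fun u => ENNReal.ofReal (u ^ (-a))) (by fun_prop) (by fun_prop)
      (hρ.mono fun u hu => (ofReal_pos.mpr (Real.rpow_pos_of_pos hu _)).ne')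
      (ae_of_all _ fun _ => ofReal_ne_top)).trans_eq ?_
    congr 1
    refine lintegral_congr_ae (hρ.mono fun u hu => ?_)
    dsimp only
    rw [ENNReal.ofReal_rpow_of_pos (Real.rpow_pos_of_pos hu _), ← Real.rpow_mul hu.le]
    ring_nf
  have hswap : ∫⁻ t in Ioi 0,
        (∫⁻ u, ENNReal.ofReal (u ^ (a * (q - 1))) * F (t * u) ^ q ∂ρ) * ENNReal.ofReal (t ^ μ)
      = ∫⁻ u, ENNReal.ofReal (u ^ (a * (q - 1)))
          * (∫⁻ t in Ioi 0, F (u * t) ^ q * ENNReal.ofReal (t ^ μ)) ∂ρ := by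
    simp_rw [← lintegral_mul_const' _ _ ofReal_ne_top]
    rw [lintegral_lintegral_swap (by fun_prop)]
    simp_rw [← lintegral_const_mul' _ _ ofReal_ne_top]
    refine lintegral_congr fun u => lintegral_congr fun t => ?_
    rw [mul_comm t u]
    ring
  calc ∫⁻ t in Ioi 0, (∫⁻ u, F (t * u) ∂ρ) ^ q * ENNReal.ofReal (t ^ μ)
      ≤ ∫⁻ t in Ioi 0, C * (∫⁻ u, ENNReal.ofReal (u ^ (a * (q - 1))) * F (t * u) ^ q ∂ρ)
          * ENNReal.ofReal (t ^ μ) := lintegral_mono fun t => mul_le_mul_left (hHolder t) _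
    _ = C * ∫⁻ u, ENNReal.ofReal (u ^ (a * (q - 1)))
          * (∫⁻ t in Ioi 0, F (u * t) ^ q * ENNReal.ofReal (t ^ μ)) ∂ρ := by
        simp_rw [mul_assoc]
        rw [lintegral_const_mul _ (by fun_prop), hswap]
    _ = C * ∫⁻ u, ENNReal.ofReal (u ^ (a * (q - 1) - (μ + 1)))
          * (∫⁻ t in Ioi 0, F t ^ q * ENNReal.ofReal (t ^ μ)) ∂ρ := by
        refine congrArg (C * ·) (lintegral_congr_ae (hρ.mono fun u hu => ?_))
        dsimp only
        rw [lintegral_Ioi_comp_mul_mul_rpow hu μ (F · ^ q), ← mul_assoc,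
          ← ENNReal.ofReal_mul (by positivity), ← Real.rpow_add hu, ← sub_eq_add_neg]
    _ = _ := by rw [lintegral_mul_const _ (by fun_prop), mul_assoc]

theorem integrableOn_rpow_mul_one_sub_rpow {a b : ℝ} (ha : -1 < a) (hb : -1 < b) :
    IntegrableOn (fun u : ℝ => u ^ a * (1 - u) ^ b) (Ioo 0 1) := by
  have hbeta := (Complex.betaIntegral_convergent (u := a + 1) (v := b + 1)
    (by simpa using neg_lt_iff_pos_add.mp ha) (by simpa using neg_lt_iff_pos_add.mp hb)).norm
  rw [intervalIntegrable_iff_integrableOn_Ioo_of_le zero_le_one] at hbeta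
  refine hbeta.congr_fun (fun u hu => ?_) measurableSet_Ioo
  have h1u : 0 < 1 - u := sub_pos.mpr hu.2
  simp only [add_sub_cancel_right, norm_mul]
  rw [Complex.norm_cpow_eq_rpow_re_of_pos hu.1, ← Complex.ofReal_one, ← Complex.ofReal_sub,
    Complex.norm_cpow_eq_rpow_re_of_pos h1u]
  simp

noncomputable def betaKernel (α : ℝ) : Measure ℝ :=
  (volume.restrict (Ioo 0 1)).withDensity fun u => ENNReal.ofReal ((1 - u) ^ (α - 1))

theorem lintegral_betaKernel (α : ℝ) (g : ℝ → ℝ≥0∞) :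
    ∫⁻ u, g u ∂betaKernel α = ∫⁻ u in Ioo 0 1, ENNReal.ofReal ((1 - u) ^ (α - 1)) * g u :=
  lintegral_withDensity_eq_lintegral_mul_non_measurable _ (by fun_prop)
    (ae_of_all _ fun _ => ofReal_lt_top) g

instance (α : ℝ) : SFinite (betaKernel α) := by
  unfold betaKernel
  infer_instance

theorem ae_betaKernel_pos (α : ℝ) : ∀ᵐ u ∂betaKernel α, 0 < u :=
  (withDensity_absolutelyContinuous _ _).ae_le
    (ae_restrict_of_forall_mem measurableSet_Ioo fun _ hu => hu.1)

theorem lintegral_betaKernel_rpow_lt_top {α c : ℝ} (hα : 0 < α) (hc : -1 < c) :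
    ∫⁻ u, ENNReal.ofReal (u ^ c) ∂betaKernel α < ⊤ := by
  rw [lintegral_betaKernel]
  refine lt_of_eq_of_lt (setLIntegral_congr_fun measurableSet_Ioo fun u hu => ?_)
    (integrableOn_rpow_mul_one_sub_rpow hc (by linarith : -1 < α - 1)).setLIntegral_lt_top
  rw [mul_comm, ENNReal.ofReal_mul (Real.rpow_nonneg hu.1.le _)]

noncomputable def riemannLiouville (α : ℝ) (f : ℝ → ℝ) (t : ℝ) : ℝ :=
  (Real.Gamma α)⁻¹ * ∫ s in Ioo 0 t, (t - s) ^ (α - 1) * f s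

theorem enorm_integral_Ioo_sub_rpow_mul_le {α t : ℝ} (ht : 0 < t) (f : ℝ → ℝ) :
    ‖∫ s in Ioo 0 t, (t - s) ^ (α - 1) * f s‖ₑ
      ≤ ENNReal.ofReal (t ^ α) * ∫⁻ u, ‖f (t * u)‖ₑ ∂betaKernel α := by
  have hkernel : ∀ u ∈ Ioo (0 : ℝ) 1, ‖(t - t * u) ^ (α - 1) * f (t * u)‖ₑ
      = ENNReal.ofReal (t ^ (α - 1)) * (ENNReal.ofReal ((1 - u) ^ (α - 1)) * ‖f (t * u)‖ₑ) := by
    intro u hu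
    have h1u : 0 ≤ 1 - u := sub_nonneg.mpr hu.2.le
    rw [enorm_mul, show t - t * u = t * (1 - u) by ring, Real.mul_rpow ht.le h1u,
      Real.enorm_of_nonneg (by positivity), ENNReal.ofReal_mul (by positivity), mul_assoc]
  calc ‖∫ s in Ioo 0 t, (t - s) ^ (α - 1) * f s‖ₑ
      ≤ ∫⁻ s in Ioo 0 t, ‖(t - s) ^ (α - 1) * f s‖ₑ := enorm_integral_le_lintegral_enorm _
    _ = ENNReal.ofReal t * ENNReal.ofReal (t ^ (α - 1)) * ∫⁻ u, ‖f (t * u)‖ₑ ∂betaKernel α := by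
        rw [lintegral_Ioo_zero_eq_mul_lintegral_comp_mul ht,
          setLIntegral_congr_fun measurableSet_Ioo hkernel, lintegral_const_mul' _ _ ofReal_ne_top,
          lintegral_betaKernel, mul_assoc]
    _ = ENNReal.ofReal (t ^ α) * ∫⁻ u, ‖f (t * u)‖ₑ ∂betaKernel α := by
        rw [← ENNReal.ofReal_mul ht.le, Real.rpow_sub_one ht.ne', mul_div_cancel₀ _ ht.ne']

theorem enorm_rpow_neg_mul_riemannLiouville_le {α t : ℝ} (ht : 0 < t) (f : ℝ → ℝ) :
    ‖t ^ (-α) * riemannLiouville α f t‖ₑ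
      ≤ ‖(Real.Gamma α)⁻¹‖ₑ * ∫⁻ u, ‖f (t * u)‖ₑ ∂betaKernel α := by
  have hcancel : ENNReal.ofReal (t ^ (-α)) * ENNReal.ofReal (t ^ α) = 1 := by
    rw [← ENNReal.ofReal_mul (by positivity), ← Real.rpow_add ht, neg_add_cancel, Real.rpow_zero,
      ENNReal.ofReal_one]
  calc ‖t ^ (-α) * riemannLiouville α f t‖ₑ
      = ENNReal.ofReal (t ^ (-α)) * (‖(Real.Gamma α)⁻¹‖ₑ
          * ‖∫ s in Ioo 0 t, (t - s) ^ (α - 1) * f s‖ₑ) := by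
        rw [riemannLiouville, enorm_mul, enorm_mul, Real.enorm_of_nonneg (by positivity)]
    _ ≤ ENNReal.ofReal (t ^ (-α)) * (‖(Real.Gamma α)⁻¹‖ₑ
          * (ENNReal.ofReal (t ^ α) * ∫⁻ u, ‖f (t * u)‖ₑ ∂betaKernel α)) := by
        gcongr
        exact enorm_integral_Ioo_sub_rpow_mul_le ht f
    _ = ‖(Real.Gamma α)⁻¹‖ₑ * ∫⁻ u, ‖f (t * u)‖ₑ ∂betaKernel α := by
        rw [mul_left_comm, ← mul_assoc (ENNReal.ofReal _), hcancel, one_mul]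

theorem exists_lintegral_enorm_rpow_neg_mul_riemannLiouville_le {α q μ : ℝ} (hα : 0 < α)
    (hq : 1 < q) (hμ : μ < q - 1) :
    ∃ C : ℝ≥0∞, C ≠ ⊤ ∧ ∀ f : ℝ → ℝ, Measurable f →
      ∫⁻ t in Ioi 0, ‖t ^ (-α) * riemannLiouville α f t‖ₑ ^ q * ENNReal.ofReal (t ^ μ)
        ≤ C * ∫⁻ t in Ioi 0, ‖f t‖ₑ ^ q * ENNReal.ofReal (t ^ μ) := by
  have hq1 : 0 < q - 1 := by linarith
  obtain ⟨a, hμa, ha1⟩ := exists_between ((div_lt_one hq1).mpr hμ)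
  rw [div_lt_iff₀ hq1] at hμa
  set C₁ := ∫⁻ u, ENNReal.ofReal (u ^ (-a)) ∂betaKernel α
  set C₂ := ∫⁻ u, ENNReal.ofReal (u ^ (a * (q - 1) - (μ + 1))) ∂betaKernel α
  have hC₁ : C₁ ≠ ⊤ := (lintegral_betaKernel_rpow_lt_top hα (by linarith)).ne
  have hC₂ : C₂ ≠ ⊤ := (lintegral_betaKernel_rpow_lt_top hα (by linarith)).ne
  refine ⟨‖(Real.Gamma α)⁻¹‖ₑ ^ q * (C₁ ^ (q - 1) * C₂), ?_, fun f hf => ?_⟩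
  · exact mul_ne_top (rpow_ne_top_of_nonneg (by linarith) enorm_ne_top)
      (mul_ne_top (rpow_ne_top_of_nonneg hq1.le hC₁) hC₂)
  calc ∫⁻ t in Ioi 0, ‖t ^ (-α) * riemannLiouville α f t‖ₑ ^ q * ENNReal.ofReal (t ^ μ)
      ≤ ∫⁻ t in Ioi 0, ‖(Real.Gamma α)⁻¹‖ₑ ^ q
          * ((∫⁻ u, ‖f (t * u)‖ₑ ∂betaKernel α) ^ q * ENNReal.ofReal (t ^ μ)) := by
        refine setLIntegral_mono' measurableSet_Ioi fun t ht => ?_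
        rw [← mul_assoc, ← ENNReal.mul_rpow_of_nonneg _ _ (by linarith)]
        gcongr
        exact enorm_rpow_neg_mul_riemannLiouville_le ht f
    _ ≤ ‖(Real.Gamma α)⁻¹‖ₑ ^ q * (C₁ ^ (q - 1) * C₂
          * ∫⁻ t in Ioi 0, ‖f t‖ₑ ^ q * ENNReal.ofReal (t ^ μ)) := by
        rw [lintegral_const_mul' _ _ (rpow_ne_top_of_nonneg (by linarith) enorm_ne_top)]
        gcongr
        exact lintegral_rpow_lintegral_comp_mul_le (ae_betaKernel_pos α) hq a μ hf.enorm
    _ = _ := by ring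

theorem riemannLiouville_indicator {α : ℝ} {f : ℝ → ℝ} {S : Set ℝ}
    (hS : ∀ t ∈ S, Ioo 0 t ⊆ S) {t : ℝ} (ht : t ∈ S) :
    riemannLiouville α (S.indicator f) t = riemannLiouville α f t := by
  rw [riemannLiouville, riemannLiouville,
    setIntegral_congr_fun measurableSet_Ioo fun s hs => by rw [indicator_of_mem (hS t ht hs)]]

theorem ofReal_abs_rpow_mul (x y : ℝ) {q : ℝ} (hq : 0 ≤ q) :
    ENNReal.ofReal (|x| ^ q * y) = ‖x‖ₑ ^ q * ENNReal.ofReal y := by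
  rw [ENNReal.ofReal_mul (by positivity), ← ENNReal.ofReal_rpow_of_nonneg (abs_nonneg x) hq,
    Real.enorm_eq_ofReal_abs]

theorem setLIntegral_enorm_indicator_rpow_mul {s S : Set ℝ} (hS : MeasurableSet S) (hSs : S ⊆ s)
    {q : ℝ} (hq : 0 < q) (f : ℝ → ℝ) (w : ℝ → ℝ≥0∞) :
    ∫⁻ t in s, ‖S.indicator f t‖ₑ ^ q * w t = ∫⁻ t in S, ‖f t‖ₑ ^ q * w t := by
  have hind : ∀ t, ‖S.indicator f t‖ₑ ^ q * w t = S.indicator (fun t => ‖f t‖ₑ ^ q * w t) t := by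
    intro t
    by_cases ht : t ∈ S <;> simp [ht, hq]
  rw [lintegral_congr hind, lintegral_indicator hS, Measure.restrict_restrict hS,
    inter_eq_self_of_subset_left hSs]

theorem stmt_0_general (α q μ : ℝ) (hα : 0 < α) (hq : 1 < q) (hμ : μ < q - 1) :
    ∃ N : ℝ, 0 < N ∧ ∀ (T : ℝ≥0∞), 0 < T → ∀ f : ℝ → ℝ, Measurable f →
      (∫⁻ t in {t : ℝ | 0 < t ∧ ENNReal.ofReal t < T},
          ENNReal.ofReal (|t ^ (-α) *
            ((Real.Gamma α)⁻¹ * ∫ s in Ioo (0:ℝ) t, (t - s) ^ (α - 1) * f s)| ^ q * t ^ μ)) ≤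
        ENNReal.ofReal N *
          ∫⁻ t in {t : ℝ | 0 < t ∧ ENNReal.ofReal t < T},
            ENNReal.ofReal (|f t| ^ q * t ^ μ) := by
  obtain ⟨C, hC, hHardy⟩ := exists_lintegral_enorm_rpow_neg_mul_riemannLiouville_le hα hq hμ
  refine ⟨C.toReal + 1, by positivity, fun T _ f hf => ?_⟩
  set S := {t : ℝ | 0 < t ∧ ENNReal.ofReal t < T}
  have hS : MeasurableSet S :=
    measurableSet_Ioi.inter (measurableSet_lt ENNReal.measurable_ofReal measurable_const)
  have hSdown : ∀ t ∈ S, Ioo 0 t ⊆ S := fun t ht s hs =>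
    ⟨hs.1, (ENNReal.ofReal_le_ofReal hs.2.le).trans_lt ht.2⟩
  have hCN : C ≤ ENNReal.ofReal (C.toReal + 1) :=
    (ENNReal.le_ofReal_iff_toReal_le hC (by positivity)).mpr (by linarith)
  simp_rw [ofReal_abs_rpow_mul _ _ (by linarith : (0 : ℝ) ≤ q)]
  calc ∫⁻ t in S, ‖t ^ (-α) * riemannLiouville α f t‖ₑ ^ q * ENNReal.ofReal (t ^ μ)
      = ∫⁻ t in S, ‖t ^ (-α) * riemannLiouville α (S.indicator f) t‖ₑ ^ q
          * ENNReal.ofReal (t ^ μ) :=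
        setLIntegral_congr_fun hS fun t ht => by rw [riemannLiouville_indicator hSdown ht]
    _ ≤ ∫⁻ t in Ioi 0, ‖t ^ (-α) * riemannLiouville α (S.indicator f) t‖ₑ ^ q
          * ENNReal.ofReal (t ^ μ) := lintegral_mono_set fun t ht => ht.1
    _ ≤ C * ∫⁻ t in Ioi 0, ‖S.indicator f t‖ₑ ^ q * ENNReal.ofReal (t ^ μ) :=
        hHardy _ (hf.indicator hS)
    _ ≤ ENNReal.ofReal (C.toReal + 1) * ∫⁻ t in S, ‖f t‖ₑ ^ q * ENNReal.ofReal (t ^ μ) := by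
        rw [setLIntegral_enorm_indicator_rpow_mul (s := Ioi 0) hS (fun t ht => ht.1) (by linarith)]
        gcongr

/-- Weighted Hardy-type inequality for the Riemann–Liouville fractional integral
`I^α f(t) = (1/Γ(α)) ∫₀ᵗ (t−s)^{α−1} f(s) ds` on `(0,T)` with `T ∈ (0,∞]`. -/
theorem stmt_0 (α q μ : ℝ) (hα : 0 < α) (hα1 : α ≤ 1) (hq : 1 < q) (hμ : μ < q - 1) :
    ∃ N : ℝ, 0 < N ∧ ∀ (T : ℝ≥0∞), 0 < T → ∀ f : ℝ → ℝ, Measurable f →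
      (∫⁻ t in {t : ℝ | 0 < t ∧ ENNReal.ofReal t < T},
          ENNReal.ofReal (|t ^ (-α) *
            ((Real.Gamma α)⁻¹ * ∫ s in Ioo (0:ℝ) t, (t - s) ^ (α - 1) * f s)| ^ q * t ^ μ)) ≤
        ENNReal.ofReal N *
          ∫⁻ t in {t : ℝ | 0 < t ∧ ENNReal.ofReal t < T},
            ENNReal.ofReal (|f t| ^ q * t ^ μ) :=
  stmt_0_general α q μ hα hq hμ
end

section
/- Let α ∈ (0,1) and f ∈ L_q((0,T), t^μ dt) with q ∈ (1,∞), μ ∈ (−1,q−1). If u = I^α f on (0,T), then ∫₀ᵀ |u(t)|^q t^μ dt ≤ N T^{αq} ∫₀ᵀ |f(t)|^q t^μ dt, with N = N(α,q,μ). -/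
/-!
Hölder's inequality against the weight `s ^ (-μ / (q - 1))` bounds `|I^α f(t)| ^ q * t ^ μ` by
`Γ(α) ^ (-q) * B ^ (q - 1) * t ^ (α * (q - 1))` times `∫₀ᵗ (t - s) ^ (α - 1) |f s| ^ q s ^ μ ds`,
where, after the substitution `s = t σ`, `B` is the Beta value `B(1 - μ / (q - 1), α)`; it is
finite precisely because `μ < q - 1`. Integrating in `t` and exchanging the order of integration
leaves the inner integral `∫ₛᵀ (t - s) ^ (α - 1) dt ≤ T ^ α / α`.
-/

open MeasureTheory Set
open ProbabilityTheory (beta beta_pos lintegral_betaPDF lintegral_betaPDF_eq_one)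
open scoped ENNReal

lemma ProbabilityTheory.beta_one_right {u : ℝ} (hu : 0 < u) : beta u 1 = u⁻¹ := by
  rw [beta, Real.Gamma_one, mul_one, Real.Gamma_add_one hu.ne',
    div_mul_cancel_right₀ (Real.Gamma_pos_of_pos hu).ne']

lemma lintegral_Ioo_zero_one_rpow_mul_one_sub_rpow {u v : ℝ} (hu : 0 < u) (hv : 0 < v) :
    ∫⁻ x in Ioo (0:ℝ) 1, ENNReal.ofReal (x ^ (u - 1) * (1 - x) ^ (v - 1)) =
      ENNReal.ofReal (beta u v) := by
  have hB := beta_pos hu hv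
  have h := lintegral_betaPDF_eq_one hu hv
  simp_rw [lintegral_betaPDF, mul_assoc, ENNReal.ofReal_mul (one_div_pos.2 hB).le] at h
  rw [lintegral_const_mul' _ _ ENNReal.ofReal_ne_top, ENNReal.ofReal_div_of_pos hB,
    ENNReal.ofReal_one, one_div] at h
  exact (inv_inj.1 (ENNReal.eq_inv_of_mul_eq_one_left h)).symm

lemma lintegral_Ioo_rpow_sub_mul_rpow_sub {a b u v : ℝ} (hab : a < b) (hu : 0 < u)
    (hv : 0 < v) :
    ∫⁻ x in Ioo a b, ENNReal.ofReal ((x - a) ^ (u - 1) * (b - x) ^ (v - 1)) =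
      ENNReal.ofReal ((b - a) ^ (u + v - 1) * beta u v) := by
  have hba : 0 < b - a := sub_pos.2 hab
  have hchange := lintegral_image_eq_lintegral_abs_deriv_mul
    (measurableSet_Ioo (a := (0:ℝ)) (b := 1))
    (fun σ _ => ((hasDerivAt_id' σ).const_mul (b - a) |>.add_const a).hasDerivWithinAt)
    ((add_left_injective a).comp (mul_right_injective₀ hba.ne') |>.injOn)
    (fun x => ENNReal.ofReal ((x - a) ^ (u - 1) * (b - x) ^ (v - 1)))
  simp only [image_affine_Ioo hba, mul_zero, zero_add, mul_one, sub_add_cancel,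
    add_sub_cancel_right, abs_of_pos hba] at hchange
  have hscale : ∀ σ ∈ Ioo (0:ℝ) 1,
      ENNReal.ofReal (b - a) *
          ENNReal.ofReal (((b - a) * σ) ^ (u - 1) * (b - ((b - a) * σ + a)) ^ (v - 1)) =
        ENNReal.ofReal ((b - a) ^ (u + v - 1)) *
          ENNReal.ofReal (σ ^ (u - 1) * (1 - σ) ^ (v - 1)) := by
    rintro σ ⟨hσ0, hσ1⟩
    rw [← ENNReal.ofReal_mul hba.le, ← ENNReal.ofReal_mul (by positivity)]
    congr 1
    rw [show b - ((b - a) * σ + a) = (b - a) * (1 - σ) by ring,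
      Real.mul_rpow hba.le hσ0.le, Real.mul_rpow hba.le (by linarith),
      show u + v - 1 = 1 + (u - 1) + (v - 1) by ring, Real.rpow_add hba, Real.rpow_add hba,
      Real.rpow_one]
    ring
  rw [hchange, setLIntegral_congr_fun measurableSet_Ioo hscale,
    lintegral_const_mul' _ _ ENNReal.ofReal_ne_top,
    lintegral_Ioo_zero_one_rpow_mul_one_sub_rpow hu hv, ← ENNReal.ofReal_mul (by positivity)]

lemma lintegral_Ioo_lintegral_Ioo_swap {a b : ℝ} {F : ℝ → ℝ → ℝ≥0∞}
    (hF : Measurable (Function.uncurry F)) :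
    ∫⁻ t in Ioo a b, ∫⁻ s in Ioo a t, F t s = ∫⁻ s in Ioo a b, ∫⁻ t in Ioo s b, F t s := by
  have hinner_left : ∀ t ∈ Ioo a b,
      ∫⁻ s in Ioo a t, F t s = ∫⁻ s in Ioo a b, (Iio t).indicator (F t) s := by
    rintro t ⟨-, htb⟩
    rw [lintegral_indicator measurableSet_Iio, Measure.restrict_restrict measurableSet_Iio,
      Iio_inter_Ioo, min_eq_left htb.le]
  have hinner_right : ∀ s ∈ Ioo a b,
      ∫⁻ t in Ioo s b, F t s = ∫⁻ t in Ioo a b, (Ioi s).indicator (F · s) t := by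
    rintro s ⟨has, -⟩
    rw [lintegral_indicator measurableSet_Ioi, Measure.restrict_restrict measurableSet_Ioi,
      Ioi_inter_Ioo, max_eq_left has.le]
  have hind : ∀ t s, (Iio t).indicator (F t) s = (Ioi s).indicator (F · s) t := by
    intro t s
    by_cases hst : s < t <;> simp [hst]
  have hmeas : Measurable (Function.uncurry fun t s => (Iio t).indicator (F t) s) := by
    have : (Function.uncurry fun t s => (Iio t).indicator (F t) s) =
        {p : ℝ × ℝ | p.2 < p.1}.indicator (Function.uncurry F) := by
      ext ⟨t, s⟩
      by_cases hst : s < t <;> simp [hst]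
    rw [this]
    exact hF.indicator (measurableSet_lt measurable_snd measurable_fst)
  rw [setLIntegral_congr_fun measurableSet_Ioo hinner_left,
    lintegral_lintegral_swap hmeas.aemeasurable,
    setLIntegral_congr_fun measurableSet_Ioo hinner_right]
  simp_rw [hind]

lemma lintegral_Ioo_lintegral_Ioo_sub_rpow_mul_le {α T : ℝ} (hα : 0 < α) {G : ℝ → ℝ≥0∞}
    (hG : Measurable G) :
    ∫⁻ t in Ioo 0 T, ∫⁻ s in Ioo 0 t, ENNReal.ofReal ((t - s) ^ (α - 1)) * G s ≤
      ENNReal.ofReal (T ^ α / α) * ∫⁻ s in Ioo 0 T, G s := by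
  have hinner : ∀ s ∈ Ioo 0 T,
      ∫⁻ t in Ioo s T, ENNReal.ofReal ((t - s) ^ (α - 1)) * G s ≤
        ENNReal.ofReal (T ^ α / α) * G s := by
    rintro s ⟨hs0, hsT⟩
    have hkernel := lintegral_Ioo_rpow_sub_mul_rpow_sub hsT hα one_pos
    simp only [sub_self, Real.rpow_zero, mul_one, add_sub_cancel_right,
      ProbabilityTheory.beta_one_right hα] at hkernel
    rw [lintegral_mul_const _ (by fun_prop), hkernel, ← div_eq_mul_inv]
    gcongr
    linarith
  rw [lintegral_Ioo_lintegral_Ioo_swap (by fun_prop),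
    ← lintegral_const_mul' _ _ ENNReal.ofReal_ne_top]
  exact setLIntegral_mono' measurableSet_Ioo hinner

lemma rpow_mul_rpow_weighted_eq {q k w g : ℝ} (hq : 0 < q) (hk : 0 ≤ k) (hw : 0 < w)
    (hg : 0 ≤ g) :
    (k * w) ^ ((q - 1) / q) * (k * g ^ q * w ^ (1 - q)) ^ (1 / q) = k * g := by
  rw [Real.mul_rpow hk hw.le, Real.mul_rpow (by positivity) (by positivity),
    Real.mul_rpow hk (by positivity), one_div, Real.rpow_rpow_inv hg hq.ne',
    ← Real.rpow_mul hw.le]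
  have hk_exp : (q - 1) / q + q⁻¹ = 1 := by field_simp; ring
  have hw_exp : (q - 1) / q + (1 - q) * q⁻¹ = 0 := by ring
  calc k ^ ((q - 1) / q) * w ^ ((q - 1) / q) * (k ^ q⁻¹ * g * w ^ ((1 - q) * q⁻¹))
      = k ^ ((q - 1) / q) * k ^ q⁻¹ * (w ^ ((q - 1) / q) * w ^ ((1 - q) * q⁻¹)) * g := by
        ring
    _ = k * g := by
        rw [← Real.rpow_add' hk (by rw [hk_exp]; exact one_ne_zero), hk_exp, Real.rpow_one,
          ← Real.rpow_add hw, hw_exp, Real.rpow_zero, mul_one]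

lemma lintegral_ofReal_mul_rpow_le_weighted {X : Type*} [MeasurableSpace X] {μ : Measure X}
    {q : ℝ} (hq : 1 < q) {k w g : X → ℝ} (hkm : Measurable k) (hwm : Measurable w)
    (hgm : Measurable g) (hk : ∀ᵐ x ∂μ, 0 ≤ k x) (hw : ∀ᵐ x ∂μ, 0 < w x)
    (hg : ∀ᵐ x ∂μ, 0 ≤ g x) :
    (∫⁻ x, ENNReal.ofReal (k x * g x) ∂μ) ^ q ≤
      (∫⁻ x, ENNReal.ofReal (k x * w x) ∂μ) ^ (q - 1) *
        ∫⁻ x, ENNReal.ofReal (k x * g x ^ q * w x ^ (1 - q)) ∂μ := by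
  have hq0 : 0 < q := by linarith
  have hpq : (q / (q - 1)).HolderConjugate q := (Real.HolderConjugate.conjExponent hq).symm
  have hholder := ENNReal.lintegral_mul_le_Lp_mul_Lq μ hpq
    (f := fun x => ENNReal.ofReal (k x * w x) ^ ((q - 1) / q))
    (g := fun x => ENNReal.ofReal (k x * g x ^ q * w x ^ (1 - q)) ^ (1 / q))
    (by fun_prop) (by fun_prop)
  have hprod : (fun x => ENNReal.ofReal (k x * w x) ^ ((q - 1) / q) *
      ENNReal.ofReal (k x * g x ^ q * w x ^ (1 - q)) ^ (1 / q)) =ᵐ[μ]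
      fun x => ENNReal.ofReal (k x * g x) := by
    filter_upwards [hk, hw, hg] with x hkx hwx hgx
    rw [ENNReal.ofReal_rpow_of_nonneg (by positivity) (by positivity),
      ENNReal.ofReal_rpow_of_nonneg (by positivity) (by positivity),
      ← ENNReal.ofReal_mul (by positivity), rpow_mul_rpow_weighted_eq hq0 hkx hwx hgx]
  have hexp₁ : (q - 1) / q * (q / (q - 1)) = 1 := by field_simp [(sub_pos.2 hq).ne']
  have hexp₂ : 1 / q * q = 1 := by field_simp
  simp only [Pi.mul_apply, ← ENNReal.rpow_mul, hexp₁, hexp₂, ENNReal.rpow_one, one_div_div,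
    lintegral_congr_ae hprod] at hholder
  calc (∫⁻ x, ENNReal.ofReal (k x * g x) ∂μ) ^ q
      ≤ ((∫⁻ x, ENNReal.ofReal (k x * w x) ∂μ) ^ ((q - 1) / q) *
          (∫⁻ x, ENNReal.ofReal (k x * g x ^ q * w x ^ (1 - q)) ∂μ) ^ (1 / q)) ^ q :=
        ENNReal.rpow_le_rpow hholder hq0.le
    _ = _ := by
        rw [ENNReal.mul_rpow_of_nonneg _ _ hq0.le, ← ENNReal.rpow_mul, ← ENNReal.rpow_mul,
          div_mul_cancel₀ _ hq0.ne', one_div_mul_cancel hq0.ne', ENNReal.rpow_one]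

lemma ofReal_abs_integral_rpow_mul_le {α q μ t : ℝ} (hα : 0 < α) (hq : 1 < q)
    (hμ : μ < q - 1) (ht : 0 < t) {f : ℝ → ℝ} (hf : Measurable f) :
    ENNReal.ofReal |∫ s in Ioo 0 t, (t - s) ^ (α - 1) * f s| ^ q * ENNReal.ofReal (t ^ μ) ≤
      ENNReal.ofReal (beta (1 - μ / (q - 1)) α ^ (q - 1) * t ^ (α * (q - 1))) *
        ∫⁻ s in Ioo 0 t,
          ENNReal.ofReal ((t - s) ^ (α - 1)) * ENNReal.ofReal (|f s| ^ q * s ^ μ) := by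
  have hq1 : 0 < q - 1 := sub_pos.2 hq
  -- the weight is `s ^ (u - 1)`, chosen so that `(s ^ (u - 1)) ^ (1 - q) = s ^ μ`
  set u := 1 - μ / (q - 1) with hu_def
  have hu : 0 < u := by rw [hu_def, sub_pos, div_lt_one hq1]; exact hμ
  set B := beta u α
  have hB : 0 < B := beta_pos hu hα
  have hI : ENNReal.ofReal |∫ s in Ioo 0 t, (t - s) ^ (α - 1) * f s| ≤
      ∫⁻ s in Ioo 0 t, ENNReal.ofReal ((t - s) ^ (α - 1) * |f s|) := by
    rw [← Real.enorm_eq_ofReal_abs]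
    refine (enorm_integral_le_lintegral_enorm _).trans_eq
      (setLIntegral_congr_fun measurableSet_Ioo ?_)
    rintro s ⟨-, hst⟩
    dsimp only
    rw [Real.enorm_eq_ofReal_abs, abs_mul, abs_of_nonneg (Real.rpow_nonneg (by linarith) _)]
  have hweight : ∫⁻ s in Ioo 0 t, ENNReal.ofReal ((t - s) ^ (α - 1) * s ^ (u - 1)) =
      ENNReal.ofReal (t ^ (u + α - 1) * B) := by
    have h := lintegral_Ioo_rpow_sub_mul_rpow_sub ht hu hα
    simp only [sub_zero] at h
    exact (setLIntegral_congr_fun measurableSet_Ioo fun s _ => by rw [mul_comm]).trans h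
  have hweighted_f : ∫⁻ s in Ioo 0 t,
        ENNReal.ofReal ((t - s) ^ (α - 1) * |f s| ^ q * (s ^ (u - 1)) ^ (1 - q)) =
      ∫⁻ s in Ioo 0 t,
        ENNReal.ofReal ((t - s) ^ (α - 1)) * ENNReal.ofReal (|f s| ^ q * s ^ μ) := by
    refine setLIntegral_congr_fun measurableSet_Ioo ?_
    rintro s ⟨hs0, hst⟩
    dsimp only
    rw [← ENNReal.ofReal_mul (Real.rpow_nonneg (by linarith) _), ← Real.rpow_mul hs0.le,
      mul_assoc]
    congr 4
    rw [hu_def]; field_simp; ring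
  have hholder := lintegral_ofReal_mul_rpow_le_weighted (μ := volume.restrict (Ioo 0 t)) hq
    (k := fun s => (t - s) ^ (α - 1)) (w := fun s => s ^ (u - 1)) (g := fun s => |f s|)
    (by fun_prop) (by fun_prop) (by fun_prop)
    ((ae_restrict_mem measurableSet_Ioo).mono fun s hs =>
      Real.rpow_nonneg (by linarith [hs.2]) _)
    ((ae_restrict_mem measurableSet_Ioo).mono fun s hs => Real.rpow_pos_of_pos hs.1 _)
    (ae_of_all _ fun s => abs_nonneg (f s))
  rw [hweight, hweighted_f] at hholder
  calc ENNReal.ofReal |∫ s in Ioo 0 t, (t - s) ^ (α - 1) * f s| ^ q * ENNReal.ofReal (t ^ μ)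
      ≤ ENNReal.ofReal (t ^ (u + α - 1) * B) ^ (q - 1) *
          (∫⁻ s in Ioo 0 t, ENNReal.ofReal ((t - s) ^ (α - 1)) *
            ENNReal.ofReal (|f s| ^ q * s ^ μ)) * ENNReal.ofReal (t ^ μ) := by
        gcongr
        exact (ENNReal.rpow_le_rpow hI (by linarith)).trans hholder
    _ = _ := by
        rw [mul_right_comm, ENNReal.ofReal_rpow_of_nonneg (by positivity) hq1.le,
          ← ENNReal.ofReal_mul (by positivity)]
        congr 2
        rw [Real.mul_rpow (by positivity) hB.le, ← Real.rpow_mul ht.le, mul_right_comm,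
          ← Real.rpow_add ht, mul_comm]
        congr 2
        rw [hu_def]; field_simp; ring

/-- Boundedness of `I^α` on weighted `L_q(0,T)` with constant `N(α,q,μ) T^{αq}`
(in the `q`-th power form). -/
theorem stmt_5 (α q μ : ℝ) (hα : α ∈ Ioo (0:ℝ) 1) (hq : 1 < q)
    (hμ : μ ∈ Ioo (-1 : ℝ) (q - 1)) :
    ∃ N : ℝ, 0 < N ∧ ∀ T : ℝ, 0 < T → ∀ f : ℝ → ℝ, Measurable f →
      (∫⁻ t in Ioo (0:ℝ) T, ENNReal.ofReal (|f t| ^ q * t ^ μ)) < ⊤ →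
      (∫⁻ t in Ioo (0:ℝ) T,
          ENNReal.ofReal
            (|(Real.Gamma α)⁻¹ * ∫ s in Ioo (0:ℝ) t, (t - s) ^ (α - 1) * f s| ^ q * t ^ μ)) ≤
        ENNReal.ofReal (N * T ^ (α * q)) *
          ∫⁻ t in Ioo (0:ℝ) T, ENNReal.ofReal (|f t| ^ q * t ^ μ) := by
  obtain ⟨hα0, -⟩ := hα
  have hq1 : 0 < q - 1 := sub_pos.2 hq
  set B := beta (1 - μ / (q - 1)) α
  have hB : 0 < B := beta_pos (by rw [sub_pos, div_lt_one hq1]; exact hμ.2) hα0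
  set c := (Real.Gamma α)⁻¹
  have hc : 0 < c := inv_pos.2 (Real.Gamma_pos_of_pos hα0)
  refine ⟨c ^ q * B ^ (q - 1) / α, by positivity, fun T hT f hf _ => ?_⟩
  set G := fun s => ENNReal.ofReal (|f s| ^ q * s ^ μ)
  set K := ENNReal.ofReal (c ^ q * (B ^ (q - 1) * T ^ (α * (q - 1)))) with hK
  have hpointwise : ∀ t ∈ Ioo 0 T,
      ENNReal.ofReal (|c * ∫ s in Ioo 0 t, (t - s) ^ (α - 1) * f s| ^ q * t ^ μ) ≤
        K * ∫⁻ s in Ioo 0 t, ENNReal.ofReal ((t - s) ^ (α - 1)) * G s := by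
    rintro t ⟨ht0, htT⟩
    rw [abs_mul, abs_of_pos hc, Real.mul_rpow hc.le (abs_nonneg _), mul_assoc,
      ENNReal.ofReal_mul (by positivity), ENNReal.ofReal_mul (by positivity),
      ← ENNReal.ofReal_rpow_of_nonneg (abs_nonneg _) (by linarith), hK,
      ENNReal.ofReal_mul (by positivity), mul_assoc]
    refine mul_le_mul_right ((ofReal_abs_integral_rpow_mul_le hα0 hq hμ.2 ht0 hf).trans ?_) _
    gcongr
  have hT_exp : T ^ (α * (q - 1)) * T ^ α = T ^ (α * q) := by
    rw [← Real.rpow_add hT]; ring_nf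
  calc _ ≤ ∫⁻ t in Ioo 0 T, K * ∫⁻ s in Ioo 0 t, ENNReal.ofReal ((t - s) ^ (α - 1)) * G s :=
        setLIntegral_mono' measurableSet_Ioo hpointwise
    _ = K * ∫⁻ t in Ioo 0 T, ∫⁻ s in Ioo 0 t, ENNReal.ofReal ((t - s) ^ (α - 1)) * G s :=
        lintegral_const_mul' _ _ ENNReal.ofReal_ne_top
    _ ≤ K * (ENNReal.ofReal (T ^ α / α) * ∫⁻ s in Ioo 0 T, G s) := by
        gcongr
        exact lintegral_Ioo_lintegral_Ioo_sub_rpow_mul_le hα0 (by fun_prop)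
    _ = _ := by
        rw [← mul_assoc, ← ENNReal.ofReal_mul (by positivity), ← hT_exp]
        congr 2
        ring
end

section
/- Let α ∈ (0,1), q ∈ (1,∞), μ ∈ (−1,q−1) with α ≥ (1+μ)/q. Suppose u : (0,T) → ℝ satisfies u(t) = u₀ + I^α f(t) with f ∈ L_q((0,T), t^μ dt) and u₀ ∈ ℝ. Then |u₀| ≤ N (T^{−(1+μ)/q} ‖u‖_{L_q((0,T),t^μ dt)} + T^{α−(1+μ)/q} ‖f‖_{L_q((0,T),t^μ dt)}), with N = N(α,q,μ). -/
/-!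
Averaging `u₀ = u t - I^α f t` over `t ∈ (0, T)` gives
`T |u₀| ≤ ‖u‖_{L¹(0,T)} + ‖I^α |f|‖_{L¹(0,T)}`, and Young's inequality for the convolution of the
truncations of `|f|` and of the kernel `t^{α-1}/Γ(α)` to `(0, T)` bounds the last term by
`T^α / Γ(α+1) · ‖f‖_{L¹(0,T)}`. Hölder's inequality against the weight `t^μ` then gives
`‖v‖_{L¹(0,T)} ≤ C T^{1-(1+μ)/q} ‖v‖_{L_q((0,T), t^μ dt)}`, where `C` is the `L_{q'}(0,1)`-norm of
`t^{-μ/q}`, finite because `μ < q - 1`.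
-/

open MeasureTheory Set
open scoped ENNReal

noncomputable def weightedLqNorm (q μ T : ℝ) (v : ℝ → ℝ) : ℝ :=
  (∫ t in Ioo 0 T, |v t| ^ q * t ^ μ) ^ (1 / q)

theorem weightedLqNorm_nonneg (q μ T : ℝ) (v : ℝ → ℝ) : 0 ≤ weightedLqNorm q μ T v :=
  Real.rpow_nonneg (setIntegral_nonneg measurableSet_Ioo fun t ht => by
    have := ht.1; positivity) _

theorem lintegral_lconvolution {G : Type*} [MeasurableSpace G] [AddGroup G] [MeasurableAdd₂ G]
    [MeasurableNeg G] {μ : Measure G} [SFinite μ] [μ.IsAddLeftInvariant] {f g : G → ℝ≥0∞}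
    (hf : Measurable f) (hg : Measurable g) :
    ∫⁻ x, (f ⋆ₗ[μ] g) x ∂μ = (∫⁻ x, f x ∂μ) * ∫⁻ x, g x ∂μ := by
  simp only [lconvolution_def]
  rw [lintegral_lintegral_swap ((hf.comp measurable_snd).mul
    (hg.comp (measurable_snd.neg.add measurable_fst))).aemeasurable, ← lintegral_mul_const _ hf]
  refine lintegral_congr fun y => ?_
  rw [lintegral_const_mul (f y) (f := fun x => g (-y + x)) (hg.comp (measurable_const_add _)),
    lintegral_add_left_eq_self]

theorem lintegral_Ioo_enorm_rpow {r T : ℝ} (hr : -1 < r) (hT : 0 < T) :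
    ∫⁻ t in Ioo 0 T, ‖t ^ r‖ₑ = ENNReal.ofReal (T ^ (r + 1) / (r + 1)) := by
  rw [← ofReal_integral_norm_eq_lintegral_enorm
      ((intervalIntegral.integrableOn_Ioo_rpow_iff hT).2 hr),
    setIntegral_congr_fun measurableSet_Ioo fun t ht => Real.norm_of_nonneg
      (Real.rpow_nonneg ht.1.le r),
    ← integral_Ioc_eq_integral_Ioo, ← intervalIntegral.integral_of_le hT.le,
    integral_rpow (Or.inl hr), Real.zero_rpow (by linarith), sub_zero]

theorem aemeasurable_enorm_of_integrableOn_abs_rpow_mul_rpow {q μ : ℝ} {s : Set ℝ} {v : ℝ → ℝ}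
    (hq : q ≠ 0) (hs : s ⊆ Ioi 0) (hms : MeasurableSet s)
    (hv : IntegrableOn (fun t => |v t| ^ q * t ^ μ) s) :
    AEMeasurable (fun t => ‖v t‖ₑ) (volume.restrict s) := by
  refine (ENNReal.measurable_ofReal.comp_aemeasurable ((hv.aemeasurable.mul
    (measurable_id.pow_const (-μ)).aemeasurable).pow_const (1 / q))).congr ?_
  filter_upwards [ae_restrict_mem hms] with t ht
  simp only [Function.comp_apply, Pi.mul_apply, id]
  rw [mul_assoc, ← Real.rpow_add (hs ht), add_neg_cancel, Real.rpow_zero, mul_one,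
    ← Real.rpow_mul (abs_nonneg _), mul_one_div_cancel hq, Real.rpow_one,
    Real.enorm_eq_ofReal_abs]

theorem lintegral_Ioo_enorm_le_weighted_holder {q μ T : ℝ} {v : ℝ → ℝ} (hq : 1 < q)
    (hv : IntegrableOn (fun t => |v t| ^ q * t ^ μ) (Ioo 0 T)) :
    ∫⁻ t in Ioo 0 T, ‖v t‖ₑ ≤ ENNReal.ofReal (∫ t in Ioo 0 T, |v t| ^ q * t ^ μ) ^ (1 / q) *
      (∫⁻ t in Ioo 0 T, ‖t ^ (-μ / (q - 1))‖ₑ) ^ (1 - 1 / q) := by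
  have hq0 : 0 < q := by linarith
  set p := q / (q - 1) with hp
  have hpq : q.HolderConjugate p := Real.HolderConjugate.conjExponent hq
  have hp0 : 0 < p := hpq.symm.pos
  have hv_nonneg : 0 ≤ᵐ[volume.restrict (Ioo 0 T)] fun t => |v t| ^ q * t ^ μ := by
    filter_upwards [ae_restrict_mem measurableSet_Ioo] with t ht
    have := ht.1; positivity
  have hweighted : ∫⁻ t in Ioo 0 T, (‖v t‖ₑ * ‖t ^ (μ / q)‖ₑ) ^ q =
      ENNReal.ofReal (∫ t in Ioo 0 T, |v t| ^ q * t ^ μ) := by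
    rw [ofReal_integral_eq_lintegral_ofReal hv hv_nonneg]
    refine setLIntegral_congr_fun measurableSet_Ioo fun t ht => ?_
    rw [← enorm_mul, Real.enorm_eq_ofReal_abs, ENNReal.ofReal_rpow_of_nonneg (abs_nonneg _)
      hq0.le, abs_mul, Real.mul_rpow (abs_nonneg _) (abs_nonneg _),
      abs_of_nonneg (Real.rpow_nonneg ht.1.le _), ← Real.rpow_mul ht.1.le,
      div_mul_cancel₀ μ hq0.ne']
  have hdual : ∫⁻ t in Ioo 0 T, ‖t ^ (-(μ / q))‖ₑ ^ p = ∫⁻ t in Ioo 0 T, ‖t ^ (-μ / (q - 1))‖ₑ := by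
    refine setLIntegral_congr_fun measurableSet_Ioo fun t ht => ?_
    rw [Real.enorm_eq_ofReal (Real.rpow_nonneg ht.1.le _), Real.enorm_eq_ofReal
      (Real.rpow_nonneg ht.1.le _), ENNReal.ofReal_rpow_of_nonneg (Real.rpow_nonneg ht.1.le _)
      hp0.le, ← Real.rpow_mul ht.1.le]
    congr 2
    rw [hp]
    field_simp
  have hp' : 1 / p = 1 - 1 / q := by rw [hp]; field_simp
  have hmeas : AEMeasurable (fun t => ‖v t‖ₑ) (volume.restrict (Ioo 0 T)) :=
    aemeasurable_enorm_of_integrableOn_abs_rpow_mul_rpow hq0.ne' (fun t ht => ht.1)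
      measurableSet_Ioo hv
  calc ∫⁻ t in Ioo 0 T, ‖v t‖ₑ
      = ∫⁻ t in Ioo 0 T, ‖v t‖ₑ * ‖t ^ (μ / q)‖ₑ * ‖t ^ (-(μ / q))‖ₑ := by
        refine setLIntegral_congr_fun measurableSet_Ioo fun t ht => ?_
        rw [mul_assoc, ← enorm_mul, ← Real.rpow_add ht.1, add_neg_cancel,
          Real.rpow_zero, enorm_one, mul_one]
    _ ≤ (∫⁻ t in Ioo 0 T, (‖v t‖ₑ * ‖t ^ (μ / q)‖ₑ) ^ q) ^ (1 / q) *
          (∫⁻ t in Ioo 0 T, ‖t ^ (-(μ / q))‖ₑ ^ p) ^ (1 / p) :=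
        ENNReal.lintegral_mul_le_Lp_mul_Lq _ hpq (f := fun t => ‖v t‖ₑ * ‖t ^ (μ / q)‖ₑ)
          (g := fun t => ‖t ^ (-(μ / q))‖ₑ)
          (hmeas.mul (measurable_id.pow_const _).enorm.aemeasurable)
          (measurable_id.pow_const _).enorm.aemeasurable
    _ = _ := by rw [hweighted, hdual, hp']

theorem lintegral_Ioo_enorm_le_weightedLqNorm {q μ T : ℝ} {v : ℝ → ℝ} (hq : 1 < q)
    (hμ : μ < q - 1) (hT : 0 < T) (hv : IntegrableOn (fun t => |v t| ^ q * t ^ μ) (Ioo 0 T)) :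
    ∫⁻ t in Ioo 0 T, ‖v t‖ₑ ≤ ENNReal.ofReal (((q - 1) / (q - 1 - μ)) ^ (1 - 1 / q) *
      T ^ (1 - (1 + μ) / q) * weightedLqNorm q μ T v) := by
  have hq1 : 0 < q - 1 := by linarith
  have hqμ : 0 < q - 1 - μ := by linarith
  have hr : -1 < -μ / (q - 1) := by
    rw [neg_div, neg_lt_neg_iff, div_lt_one hq1]; exact hμ
  have hA : 0 ≤ ∫ t in Ioo 0 T, |v t| ^ q * t ^ μ :=
    setIntegral_nonneg measurableSet_Ioo fun t ht => by have := ht.1; positivity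
  have hexp : -μ / (q - 1) + 1 = (q - 1 - μ) / (q - 1) := by field_simp; ring
  have hexp' : (q - 1 - μ) / (q - 1) * (1 - 1 / q) = 1 - (1 + μ) / q := by field_simp; ring
  refine (lintegral_Ioo_enorm_le_weighted_holder hq hv).trans_eq ?_
  rw [lintegral_Ioo_enorm_rpow hr hT, hexp, ENNReal.ofReal_rpow_of_nonneg hA (by positivity),
    ENNReal.ofReal_rpow_of_nonneg (by positivity)
      (sub_nonneg.2 (div_le_one_of_le₀ hq.le (by positivity))),
    ← ENNReal.ofReal_mul (by positivity), weightedLqNorm]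
  congr 1
  rw [Real.div_rpow (by positivity) (by positivity), ← Real.rpow_mul hT.le, hexp',
    Real.div_rpow hq1.le hqμ.le, Real.div_rpow hqμ.le hq1.le]
  field_simp

theorem lintegral_Ioo_lintegral_Ioo_enorm_rpow_sub_mul_le {α T : ℝ} {f : ℝ → ℝ} (hα : 0 < α)
    (hT : 0 < T) (hf : Measurable f) :
    ∫⁻ t in Ioo 0 T, ∫⁻ s in Ioo 0 t, ‖(t - s) ^ (α - 1) * f s‖ₑ ≤
      ENNReal.ofReal (T ^ α / α) * ∫⁻ s in Ioo 0 T, ‖f s‖ₑ := by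
  set k := (Ioo 0 T).indicator fun r : ℝ => ‖r ^ (α - 1)‖ₑ
  set F := (Ioo 0 T).indicator fun s => ‖f s‖ₑ
  have hk : Measurable k := (measurable_id.pow_const _).enorm.indicator measurableSet_Ioo
  have hF : Measurable F := hf.enorm.indicator measurableSet_Ioo
  have hconv : ∀ t ∈ Ioo 0 T, ∫⁻ s in Ioo 0 t, ‖(t - s) ^ (α - 1) * f s‖ₑ ≤ (F ⋆ₗ k) t := by
    intro t ht
    rw [lconvolution_def, ← lintegral_indicator measurableSet_Ioo]
    refine lintegral_mono fun s => ?_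
    by_cases hs : s ∈ Ioo 0 t
    · have hsT : s ∈ Ioo 0 T := ⟨hs.1, hs.2.trans ht.2⟩
      have hts : t - s ∈ Ioo 0 T := ⟨by linarith [hs.2], by linarith [hs.1, ht.2]⟩
      rw [indicator_of_mem hs, enorm_mul, mul_comm, neg_add_eq_sub]
      simp only [F, k, indicator_of_mem hsT, indicator_of_mem hts, le_refl]
    · rw [indicator_of_notMem hs]
      exact zero_le
  calc ∫⁻ t in Ioo 0 T, ∫⁻ s in Ioo 0 t, ‖(t - s) ^ (α - 1) * f s‖ₑ
      ≤ ∫⁻ t, (F ⋆ₗ k) t :=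
        (setLIntegral_mono' measurableSet_Ioo hconv).trans (setLIntegral_le_lintegral _ _)
    _ = _ := by
        rw [lintegral_lconvolution hF hk, lintegral_indicator measurableSet_Ioo,
          lintegral_indicator measurableSet_Ioo, lintegral_Ioo_enorm_rpow (by linarith) hT,
          sub_add_cancel, mul_comm]

theorem ofReal_mul_abs_le_of_eq_add_fractionalIntegral {α T u₀ : ℝ} {f u : ℝ → ℝ} (hα : 0 < α)
    (hT : 0 < T) (hf : Measurable f)
    (hu_meas : AEMeasurable (fun t => ‖u t‖ₑ) (volume.restrict (Ioo 0 T)))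
    (hu : ∀ t ∈ Ioo 0 T,
      u t = u₀ + (Real.Gamma α)⁻¹ * ∫ s in Ioo 0 t, (t - s) ^ (α - 1) * f s) :
    ENNReal.ofReal (T * |u₀|) ≤ (∫⁻ t in Ioo 0 T, ‖u t‖ₑ) +
      ENNReal.ofReal (T ^ α / Real.Gamma (α + 1)) * ∫⁻ s in Ioo 0 T, ‖f s‖ₑ := by
  have hΓ : 0 < Real.Gamma α := Real.Gamma_pos_of_pos hα
  have hpointwise : ∀ t ∈ Ioo 0 T, ‖u₀‖ₑ ≤
      ‖u t‖ₑ + ‖(Real.Gamma α)⁻¹‖ₑ * ∫⁻ s in Ioo 0 t, ‖(t - s) ^ (α - 1) * f s‖ₑ := by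
    intro t ht
    calc ‖u₀‖ₑ
        = ‖u t - (Real.Gamma α)⁻¹ * ∫ s in Ioo 0 t, (t - s) ^ (α - 1) * f s‖ₑ := by
          rw [hu t ht, add_sub_cancel_right]
      _ ≤ ‖u t‖ₑ + ‖(Real.Gamma α)⁻¹ * ∫ s in Ioo 0 t, (t - s) ^ (α - 1) * f s‖ₑ :=
          enorm_sub_le
      _ ≤ _ := by
          rw [enorm_mul]
          gcongr
          exact enorm_integral_le_lintegral_enorm _
  calc ENNReal.ofReal (T * |u₀|)
      = ∫⁻ _ in Ioo 0 T, ‖u₀‖ₑ := by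
        rw [setLIntegral_const, Real.volume_Ioo, sub_zero, Real.enorm_eq_ofReal_abs,
          ← ENNReal.ofReal_mul (abs_nonneg _), mul_comm]
    _ ≤ ∫⁻ t in Ioo 0 T,
          (‖u t‖ₑ + ‖(Real.Gamma α)⁻¹‖ₑ * ∫⁻ s in Ioo 0 t, ‖(t - s) ^ (α - 1) * f s‖ₑ) :=
        setLIntegral_mono' measurableSet_Ioo hpointwise
    _ = (∫⁻ t in Ioo 0 T, ‖u t‖ₑ) + ‖(Real.Gamma α)⁻¹‖ₑ *
          ∫⁻ t in Ioo 0 T, ∫⁻ s in Ioo 0 t, ‖(t - s) ^ (α - 1) * f s‖ₑ := by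
        rw [lintegral_add_left' hu_meas, lintegral_const_mul' _ _ enorm_ne_top]
    _ ≤ (∫⁻ t in Ioo 0 T, ‖u t‖ₑ) + ‖(Real.Gamma α)⁻¹‖ₑ *
          (ENNReal.ofReal (T ^ α / α) * ∫⁻ s in Ioo 0 T, ‖f s‖ₑ) := by
        gcongr
        exact lintegral_Ioo_lintegral_Ioo_enorm_rpow_sub_mul_le hα hT hf
    _ = _ := by
        rw [← mul_assoc, Real.enorm_eq_ofReal (inv_nonneg.2 hΓ.le),
          ← ENNReal.ofReal_mul (inv_nonneg.2 hΓ.le), Real.Gamma_add_one hα.ne']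
        congr 3
        field_simp

theorem abs_le_of_eq_add_fractionalIntegral {α q μ T u₀ : ℝ} {f u : ℝ → ℝ} (hα : 0 < α)
    (hq : 1 < q) (hμ : μ < q - 1) (hT : 0 < T) (hf : Measurable f)
    (hf_int : IntegrableOn (fun t => |f t| ^ q * t ^ μ) (Ioo 0 T))
    (hu_int : IntegrableOn (fun t => |u t| ^ q * t ^ μ) (Ioo 0 T))
    (hu : ∀ t ∈ Ioo 0 T,
      u t = u₀ + (Real.Gamma α)⁻¹ * ∫ s in Ioo 0 t, (t - s) ^ (α - 1) * f s) :
    |u₀| ≤ ((q - 1) / (q - 1 - μ)) ^ (1 - 1 / q) *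
      (T ^ (-(1 + μ) / q) * weightedLqNorm q μ T u +
        (Real.Gamma (α + 1))⁻¹ * (T ^ (α - (1 + μ) / q) * weightedLqNorm q μ T f)) := by
  set C := ((q - 1) / (q - 1 - μ)) ^ (1 - 1 / q)
  have hU := weightedLqNorm_nonneg q μ T u
  have hF := weightedLqNorm_nonneg q μ T f
  have hu_meas := aemeasurable_enorm_of_integrableOn_abs_rpow_mul_rpow (by linarith)
    (fun t ht => ht.1) measurableSet_Ioo hu_int
  have hbound : T * |u₀| ≤ C * T ^ (1 - (1 + μ) / q) * weightedLqNorm q μ T u +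
      T ^ α / Real.Gamma (α + 1) * (C * T ^ (1 - (1 + μ) / q) * weightedLqNorm q μ T f) := by
    rw [← ENNReal.ofReal_le_ofReal_iff (by positivity), ENNReal.ofReal_add (by positivity)
      (by positivity), ENNReal.ofReal_mul (p := T ^ α / _) (by positivity)]
    refine (ofReal_mul_abs_le_of_eq_add_fractionalIntegral hα hT hf hu_meas hu).trans ?_
    gcongr
    · exact lintegral_Ioo_enorm_le_weightedLqNorm hq hμ hT hu_int
    · exact lintegral_Ioo_enorm_le_weightedLqNorm hq hμ hT hf_int
  have hsplit : T ^ (1 - (1 + μ) / q) = T * T ^ (-(1 + μ) / q) := by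
    rw [show 1 - (1 + μ) / q = 1 + -(1 + μ) / q by ring, Real.rpow_add hT, Real.rpow_one]
  have hmerge : T ^ α * T ^ (-(1 + μ) / q) = T ^ (α - (1 + μ) / q) := by
    rw [← Real.rpow_add hT]; ring_nf
  refine le_of_mul_le_mul_left ?_ hT
  rw [← hmerge]
  rw [hsplit] at hbound
  linear_combination hbound

theorem stmt_8_general (α q μ : ℝ) (hα : α ∈ Ioo (0:ℝ) 1) (hq : 1 < q)
    (hμ : μ ∈ Ioo (-1:ℝ) (q-1)) :
    ∃ N : ℝ, 0 < N ∧ ∀ T : ℝ, 0 < T → ∀ f u : ℝ → ℝ, ∀ u₀ : ℝ,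
      Measurable f →
      IntegrableOn (fun t => |f t| ^ q * t ^ μ) (Ioo 0 T) →
      IntegrableOn (fun t => |u t| ^ q * t ^ μ) (Ioo 0 T) →
      (∀ t ∈ Ioo (0:ℝ) T,
        u t = u₀ + (Real.Gamma α)⁻¹ * ∫ s in Ioo (0:ℝ) t, (t - s) ^ (α - 1) * f s) →
      |u₀| ≤ N * (T ^ (-(1+μ)/q) * (∫ t in Ioo (0:ℝ) T, |u t| ^ q * t ^ μ) ^ (1/q) +
        T ^ (α - (1+μ)/q) * (∫ t in Ioo (0:ℝ) T, |f t| ^ q * t ^ μ) ^ (1/q)) := by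
  set C := ((q - 1) / (q - 1 - μ)) ^ (1 - 1 / q)
  have hC : 0 < C := Real.rpow_pos_of_pos (div_pos (by linarith) (by linarith [hμ.2])) _
  have hΓ : 0 < (Real.Gamma (α + 1))⁻¹ := inv_pos.2 (Real.Gamma_pos_of_pos (by linarith [hα.1]))
  refine ⟨C * (1 + (Real.Gamma (α + 1))⁻¹), by positivity, ?_⟩
  intro T hT f u u₀ hf hf_int hu_int hu
  have hX : 0 ≤ T ^ (-(1 + μ) / q) * weightedLqNorm q μ T u :=
    mul_nonneg (by positivity) (weightedLqNorm_nonneg q μ T u)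
  have hY : 0 ≤ T ^ (α - (1 + μ) / q) * weightedLqNorm q μ T f :=
    mul_nonneg (by positivity) (weightedLqNorm_nonneg q μ T f)
  refine (abs_le_of_eq_add_fractionalIntegral hα.1 hq hμ.2 hT hf hf_int hu_int hu).trans ?_
  unfold weightedLqNorm at hX hY ⊢
  linarith [mul_nonneg hC.le hY, mul_nonneg (mul_nonneg hC.le hΓ.le) hX]

/-- Scalar trace inequality: if `u = u₀ + I^α f` on `(0,T)` with `α ≥ (1+μ)/q`, then
`|u₀| ≤ N (T^{−(1+μ)/q} ‖u‖_{L_q(t^μ)} + T^{α−(1+μ)/q} ‖f‖_{L_q(t^μ)})`. -/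
theorem stmt_8 (α q μ : ℝ) (hα : α ∈ Ioo (0:ℝ) 1) (hq : 1 < q)
    (hμ : μ ∈ Ioo (-1:ℝ) (q-1)) (hαq : (1+μ)/q ≤ α) :
    ∃ N : ℝ, 0 < N ∧ ∀ T : ℝ, 0 < T → ∀ f u : ℝ → ℝ, ∀ u₀ : ℝ,
      Measurable f →
      IntegrableOn (fun t => |f t| ^ q * t ^ μ) (Ioo 0 T) →
      IntegrableOn (fun t => |u t| ^ q * t ^ μ) (Ioo 0 T) →
      (∀ t ∈ Ioo (0:ℝ) T,
        u t = u₀ + (Real.Gamma α)⁻¹ * ∫ s in Ioo (0:ℝ) t, (t - s) ^ (α - 1) * f s) →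
      |u₀| ≤ N * (T ^ (-(1+μ)/q) * (∫ t in Ioo (0:ℝ) T, |u t| ^ q * t ^ μ) ^ (1/q) +
        T ^ (α - (1+μ)/q) * (∫ t in Ioo (0:ℝ) T, |f t| ^ q * t ^ μ) ^ (1/q)) :=
  stmt_8_general α q μ hα hq hμ
end

section
/- Let β ∈ (0,2) and let η ∈ C^∞(ℝ) be nonnegative with support in (−1,−1/2) and ∫η = 1. For ε > 0 set η_ε(t) = ε^{−1/β} η(t ε^{−1/β}). Let u be a smooth compactly supported function on [0,∞)×ℝ^d. Then for all (t,x), u(t,x) = ∫_{ℝ₊} η_ε(t−s) u(s,x) ds − (1/β) ∫₀^ε λ^{−1} ∫_{ℝ₊} u_s(s,x) ζ((t−s)/λ^{1/β}) ds dλ, where ζ(t) = −t η(t). -/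
open MeasureTheory Set

open Filter

/-- The mollification identity: for smooth compactly supported `u` and mollifier
`η_ε(t) = ε^{−1/β} η(t ε^{−1/β})` with `supp η ⊂ (−1,−1/2)`, `∫η = 1`, for all `t ≥ 0`, `x`,
`u(t,x) = ∫_{ℝ₊} η_ε(t−s) u(s,x) ds − (1/β)∫₀^ε λ^{−1} ∫_{ℝ₊} u_s(s,x) ζ((t−s)/λ^{1/β}) ds dλ`,
where `ζ(t) = −t η(t)`. -/
theorem stmt_13 (d : ℕ) (β : ℝ) (hβ : β ∈ Ioo (0:ℝ) 2)
    (η : ℝ → ℝ) (hη : ContDiff ℝ (⊤ : ℕ∞) η) (hη0 : ∀ t, 0 ≤ η t)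
    (hηs : ∀ t, η t ≠ 0 → t ∈ Ioo (-1:ℝ) (-1/2))
    (hη1 : (∫ t, η t) = 1)
    (u : ℝ → (Fin d → ℝ) → ℝ) (hu : ContDiff ℝ (⊤ : ℕ∞) (Function.uncurry u))
    (hcpt : HasCompactSupport (Function.uncurry u)) :
    ∀ ε : ℝ, 0 < ε → ∀ t : ℝ, 0 ≤ t → ∀ x : Fin d → ℝ,
      u t x = (∫ s in Ioi (0:ℝ), ε ^ (-(1/β)) * η ((t - s) * ε ^ (-(1/β))) * u s x)
        - (1/β) * ∫ lam in Ioo (0:ℝ) ε, lam⁻¹ *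
            ∫ s in Ioi (0:ℝ), deriv (fun s' => u s' x) s *
              (-((t - s)/lam ^ (1/β)) * η ((t - s)/lam ^ (1/β))) := by
  intro ε hε t ht x
  have hβ0 : (0:ℝ) < β := hβ.1
  have hβinv : (0:ℝ) < 1/β := by positivity
  -- the time slice
  set v : ℝ → ℝ := fun s => u s x with hv_def
  have hv_smooth : ContDiff ℝ (⊤ : ℕ∞) v := by
    have : v = (Function.uncurry u) ∘ (fun s => (s, x)) := rfl
    rw [this]
    exact hu.comp (contDiff_id.prodMk contDiff_const)
  have hv_cpt : HasCompactSupport v := by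
    apply HasCompactSupport.intro (hcpt.isCompact.image continuous_fst)
    intro s hs
    by_contra h
    exact hs ⟨(s, x), subset_tsupport _ h, rfl⟩
  have hv_diff : Differentiable ℝ v := hv_smooth.differentiable (by simp)
  have hv_cont : Continuous v := hv_smooth.continuous
  have hv'_cont : Continuous (deriv v) := hv_smooth.continuous_deriv (by simp)
  have hv'_cpt : HasCompactSupport (deriv v) := hv_cpt.deriv
  have hηc : Continuous η := hη.continuous
  have hη_zero : ∀ z : ℝ, z ∉ Ioo (-1:ℝ) (-1/2) → η z = 0 := by
    intro z hz; by_contra h; exact hz (hηs z h)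
  have hη_zero' : ∀ z : ℝ, (0:ℝ) ≤ z → η z = 0 := by
    intro z hz; exact hη_zero z (fun hmem => by simp at hmem; linarith [hmem.2])
  have hη_zero'' : ∀ z : ℝ, z ≤ -1 → η z = 0 := by
    intro z hz; exact hη_zero z (fun hmem => by simp at hmem; linarith [hmem.1])
  -- the cumulative function H
  set H : ℝ → ℝ := fun z => ∫ r in (-2:ℝ)..z, η r with hH_def
  have hηii : ∀ a b : ℝ, IntervalIntegrable η volume a b := fun a b =>
    hηc.intervalIntegrable a b
  have hH_deriv : ∀ z : ℝ, HasDerivAt H (η z) z := by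
    intro z
    exact intervalIntegral.integral_hasDerivAt_right (hηii _ _)
      hηc.stronglyMeasurable.stronglyMeasurableAtFilter hηc.continuousAt
  have hH_cont : Continuous H :=
    (Differentiable.continuous (fun z => (hH_deriv z).differentiableAt))
  have hH0 : ∀ z : ℝ, z ≤ -1 → H z = 0 := by
    intro z hz
    have : EqOn η 0 (uIcc (-2:ℝ) z) := by
      intro r hr
      have hr' : r ≤ -1 := by
        rcases le_total (-2:ℝ) z with h | h
        · rw [uIcc_of_le h] at hr; exact le_trans hr.2 hz
        · rw [uIcc_of_ge h] at hr; linarith [hr.2]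
      exact hη_zero'' r hr'
    rw [hH_def]
    simp only []
    rw [intervalIntegral.integral_congr this]
    simp
  have hH1 : ∀ z : ℝ, (-1/2:ℝ) ≤ z → H z = 1 := by
    intro z hz
    have h2z : (-2:ℝ) ≤ z := by linarith
    rw [hH_def]
    simp only []
    rw [intervalIntegral.integral_of_le h2z,
      setIntegral_eq_integral_of_forall_compl_eq_zero (fun r hr => ?_), hη1]
    apply hη_zero
    intro hmem
    simp only [mem_Ioc, not_and_or, not_lt, not_le] at hr
    rcases hr with h | h
    · simp at hmem; linarith [hmem.1]
    · simp at hmem; linarith [hmem.2]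
  -- ζ
  set ζ : ℝ → ℝ := fun z => -z * η z with hζ_def
  have hζ_cont : Continuous ζ := continuous_neg.mul hηc
  have hζ_zero : ∀ z : ℝ, z ∉ Ioo (-1:ℝ) (-1/2) → ζ z = 0 := by
    intro z hz; rw [hζ_def]; simp [hη_zero z hz]
  have hζ_cpt : HasCompactSupport ζ := by
    apply HasCompactSupport.intro (isCompact_Icc (a := (-1:ℝ)) (b := (-1/2)))
    intro z hz
    exact hζ_zero z (fun hmem => hz (Ioo_subset_Icc_self hmem))
  -- positivity of rpow
  have hrpow_pos : ∀ lam : ℝ, 0 < lam → (0:ℝ) < lam ^ (1/β) :=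
    fun lam h => Real.rpow_pos_of_pos h _
  have hεp : (0:ℝ) < ε ^ (1/β) := hrpow_pos ε hε
  -- Step A : the lambda integral
  have stepA : ∀ s : ℝ,
      β⁻¹ * (∫ lam in Ioo (0:ℝ) ε, lam⁻¹ * ζ ((t - s)/lam ^ (1/β)))
        = H ((t - s)/ε ^ (1/β)) - (if s ≤ t then (1:ℝ) else 0) := by
    intro s
    rcases le_or_gt s t with hst | hst
    · -- trivial case : integrand vanishes
      have hz : ∀ lam ∈ Ioo (0:ℝ) ε, lam⁻¹ * ζ ((t - s)/lam ^ (1/β)) = (0:ℝ) := by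
        intro lam hlam
        have h1 : (0:ℝ) ≤ (t - s)/lam ^ (1/β) :=
          div_nonneg (by linarith) (hrpow_pos lam hlam.1).le
        have : ζ ((t - s)/lam ^ (1/β)) = 0 := by
          apply hζ_zero
          intro hmem
          linarith [hmem.2]
        rw [this, mul_zero]
      rw [setIntegral_congr_fun measurableSet_Ioo hz]
      have hH1' : H ((t - s)/ε ^ (1/β)) = 1 := by
        apply hH1
        have : (0:ℝ) ≤ (t - s)/ε ^ (1/β) := div_nonneg (by linarith) hεp.le
        linarith
      rw [integral_zero, mul_zero, hH1', if_pos hst, sub_self]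
    · -- main case : FTC in lambda
      have hw : t - s < 0 := by linarith
      set a : ℝ := (s - t) ^ β with ha_def
      have ha : (0:ℝ) < a := Real.rpow_pos_of_pos (by linarith) _
      have h2 : a ^ (1/β) = s - t := by
        rw [ha_def, ← Real.rpow_mul (by linarith : (0:ℝ) ≤ s - t),
          mul_one_div_cancel hβ0.ne', Real.rpow_one]
      -- for 0 < lam < a the argument is < -1
      have hsmall : ∀ lam : ℝ, 0 < lam → lam < a → (t - s)/lam ^ (1/β) < -1 := by
        intro lam h0 hla
        have h1 : lam ^ (1/β) < s - t := by
          have := Real.rpow_lt_rpow h0.le hla hβinv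
          rwa [h2] at this
        rw [div_lt_iff₀ (hrpow_pos lam h0)]
        linarith
      set g : ℝ → ℝ := fun lam => if 0 < lam then H ((t - s)/lam ^ (1/β)) else 0
        with hg_def
      set D : ℝ → ℝ := fun lam =>
          if 0 < lam then β⁻¹ * (lam⁻¹ * ζ ((t - s)/lam ^ (1/β))) else 0 with hD_def
      have hgz : ∀ lam : ℝ, lam < a → g lam = 0 := by
        intro lam hla
        rcases le_or_gt lam 0 with h | h
        · simp only [hg_def, if_neg (not_lt.2 h)]
        · simp only [hg_def, if_pos h]
          exact hH0 _ (hsmall lam h hla).le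
      have hDz : ∀ lam : ℝ, lam < a → D lam = 0 := by
        intro lam hla
        rcases le_or_gt lam 0 with h | h
        · simp only [hD_def, if_neg (not_lt.2 h)]
        · simp only [hD_def, if_pos h]
          have hz : ζ ((t - s)/lam ^ (1/β)) = 0 := by
            apply hζ_zero; intro hmem
            linarith [hmem.1, hsmall lam h hla]
          rw [hz]; ring
      have hderiv : ∀ lam ∈ uIcc (0:ℝ) ε, HasDerivAt g (D lam) lam := by
        intro lam hlam
        rcases lt_or_ge 0 lam with h | h
        · have hA : (0:ℝ) < lam ^ (1/β) := hrpow_pos lam h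
          have hpow : HasDerivAt (fun μ : ℝ => μ ^ (1/β))
              ((1/β) * lam ^ (1/β - 1)) lam :=
            Real.hasDerivAt_rpow_const (Or.inl h.ne')
          have hinner : HasDerivAt (fun μ : ℝ => (t - s)/μ ^ (1/β))
              ((0 * lam ^ (1/β) - (t - s) * ((1/β) * lam ^ (1/β - 1)))
                / (lam ^ (1/β))^2) lam :=
            (hasDerivAt_const lam (t - s)).div hpow hA.ne'
          have hcomp := (hH_deriv ((t - s)/lam ^ (1/β))).comp lam hinner
          have heq : g =ᶠ[nhds lam] fun μ => H ((t - s)/μ ^ (1/β)) := by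
            filter_upwards [Ioi_mem_nhds h] with μ hμ
            simp only [hg_def, if_pos (mem_Ioi.mp hμ)]
          have hval := hcomp.congr_of_eventuallyEq heq
          refine hval.congr_deriv ?_
          simp only [hD_def, if_pos h]
          rw [Real.rpow_sub h, Real.rpow_one]
          simp only [hζ_def]
          field_simp
          ring
        · have hlam0 : lam = 0 := by
            have := (uIcc_of_le hε.le ▸ hlam).1
            linarith
          subst hlam0
          have heq : g =ᶠ[nhds (0:ℝ)] fun _ => (0:ℝ) := by
            filter_upwards [Iio_mem_nhds ha] with μ hμ using hgz μ hμ
          have h0 := (hasDerivAt_const (0:ℝ) (0:ℝ)).congr_of_eventuallyEq heq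
          simpa [hDz 0 ha] using h0
      have hD_cont : Continuous D := by
        rw [continuous_iff_continuousAt]
        intro lam
        rcases lt_or_ge 0 lam with h | h
        · have hfor : ContinuousAt
              (fun μ : ℝ => β⁻¹ * (μ⁻¹ * ζ ((t - s)/μ ^ (1/β)))) lam := by
            apply ContinuousAt.mul continuousAt_const
            apply ContinuousAt.mul (continuousAt_inv₀ h.ne')
            apply hζ_cont.continuousAt.comp
            exact ContinuousAt.div continuousAt_const
              (Real.continuousAt_rpow_const lam _ (Or.inl h.ne'))
              (hrpow_pos lam h).ne'
          apply hfor.congr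
          filter_upwards [Ioi_mem_nhds h] with μ hμ
          simp only [hD_def, if_pos (mem_Ioi.mp hμ)]
        · apply (continuousAt_const (y := (0:ℝ))).congr
          filter_upwards [Iio_mem_nhds (lt_of_le_of_lt h ha)] with μ hμ
          exact (hDz μ hμ).symm
      have hFTC := intervalIntegral.integral_eq_sub_of_hasDerivAt hderiv
        (hD_cont.intervalIntegrable 0 ε)
      have hgε : g ε = H ((t - s)/ε ^ (1/β)) := by simp only [hg_def, if_pos hε]
      have hg0 : g 0 = 0 := by simp [hg_def]
      rw [hgε, hg0, sub_zero] at hFTC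
      have h1 : ∫ lam in (0:ℝ)..ε, D lam = ∫ lam in Ioo (0:ℝ) ε, D lam := by
        rw [intervalIntegral.integral_of_le hε.le, integral_Ioc_eq_integral_Ioo]
      have h2' : ∫ lam in Ioo (0:ℝ) ε, D lam
          = β⁻¹ * ∫ lam in Ioo (0:ℝ) ε, lam⁻¹ * ζ ((t - s)/lam ^ (1/β)) := by
        rw [← integral_const_mul]
        apply setIntegral_congr_fun measurableSet_Ioo
        intro lam hlam
        simp only [hD_def, if_pos hlam.1]
      rw [h1, h2'] at hFTC
      rw [hFTC, if_neg (not_le.2 hst), sub_zero]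
  -- bounds
  obtain ⟨M, hM⟩ := hv'_cpt.exists_bound_of_continuous hv'_cont
  obtain ⟨N, hN⟩ := hζ_cpt.exists_bound_of_continuous hζ_cont
  have hM0 : 0 ≤ M := le_trans (norm_nonneg _) (hM 0)
  have hN0 : 0 ≤ N := le_trans (norm_nonneg _) (hN 0)
  set F : ℝ → ℝ → ℝ :=
    fun lam s => lam⁻¹ * (deriv v s * ζ ((t - s)/lam ^ (1/β))) with hF_def
  have hrpow_cont : Continuous (fun μ : ℝ => μ ^ (1/β)) := by
    rw [continuous_iff_continuousAt]
    exact fun μ => Real.continuousAt_rpow_const _ _ (Or.inr hβinv.le)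
  have hFm : AEStronglyMeasurable (Function.uncurry F)
      ((volume.restrict (Ioo (0:ℝ) ε)).prod (volume.restrict (Ioi (0:ℝ)))) := by
    apply Measurable.aestronglyMeasurable
    apply Measurable.mul measurable_fst.inv
    apply Measurable.mul ((hv'_cont.measurable).comp measurable_snd)
    apply hζ_cont.measurable.comp
    exact (measurable_const.sub measurable_snd).div
      ((hrpow_cont.measurable).comp measurable_fst)
  have hslice : ∀ lam : ℝ, 0 < lam →
      Integrable (F lam) (volume.restrict (Ioi (0:ℝ))) := by
    intro lam hl
    apply Integrable.integrableOn
    apply Continuous.integrable_of_hasCompactSupport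
    · exact continuous_const.mul (hv'_cont.mul
        (hζ_cont.comp ((continuous_const.sub continuous_id).div_const _)))
    · exact (hv'_cpt.mul_right).mul_left
  have hbound : ∀ lam ∈ Ioo (0:ℝ) ε,
      (∫ s in Ioi (0:ℝ), ‖F lam s‖) ≤ M * N * lam ^ (1/β - 1) := by
    intro lam hl
    have hA : (0:ℝ) < lam ^ (1/β) := hrpow_pos lam hl.1
    have hptw : ∀ s : ℝ, ‖F lam s‖ ≤
        indicator (Ioc t (t + lam ^ (1/β))) (fun _ => lam⁻¹ * (M * N)) s := by
      intro s
      by_cases hs : s ∈ Ioc t (t + lam ^ (1/β))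
      · rw [indicator_of_mem hs]
        rw [hF_def]
        simp only [norm_mul]
        rw [Real.norm_eq_abs lam⁻¹, abs_of_nonneg (inv_nonneg.2 hl.1.le)]
        exact mul_le_mul_of_nonneg_left
          (mul_le_mul (hM s) (hN _) (norm_nonneg _) hM0) (inv_nonneg.2 hl.1.le)
      · rw [indicator_of_notMem hs]
        have hzz : ζ ((t - s)/lam ^ (1/β)) = 0 := by
          apply hζ_zero; intro hmem
          simp only [mem_Ioc, not_and_or, not_lt, not_le] at hs
          rcases hs with h | h
          · have : 0 ≤ (t - s)/lam ^ (1/β) := div_nonneg (by linarith) hA.le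
            linarith [hmem.2]
          · have : (t - s)/lam ^ (1/β) < -1 := by
              rw [div_lt_iff₀ hA]; linarith
            linarith [hmem.1]
        rw [hF_def]
        simp only [hzz, mul_zero, norm_zero]
        exact le_of_eq rfl
    have hgint : Integrable
        (indicator (Ioc t (t + lam ^ (1/β))) (fun _ => lam⁻¹ * (M * N)))
        (volume.restrict (Ioi (0:ℝ))) := by
      rw [integrable_indicator_iff measurableSet_Ioc]
      apply (integrableOn_const_iff (hC := enorm_ne_top)).2
      right
      calc (volume.restrict (Ioi (0:ℝ))) (Ioc t (t + lam ^ (1/β)))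
          ≤ volume (Ioc t (t + lam ^ (1/β))) := Measure.restrict_le_self _
        _ < ⊤ := by rw [Real.volume_Ioc]; exact ENNReal.ofReal_lt_top
    calc ∫ s in Ioi (0:ℝ), ‖F lam s‖
        ≤ ∫ s in Ioi (0:ℝ),
            indicator (Ioc t (t + lam ^ (1/β))) (fun _ => lam⁻¹ * (M * N)) s :=
          integral_mono ((hslice lam hl.1).norm) hgint hptw
      _ ≤ M * N * lam ^ (1/β - 1) := by
          rw [integral_indicator measurableSet_Ioc, setIntegral_const]
          have h1 : ((volume.restrict (Ioi (0:ℝ))) (Ioc t (t + lam ^ (1/β)))).toReal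
              ≤ lam ^ (1/β) := by
            have h2 : (volume.restrict (Ioi (0:ℝ))) (Ioc t (t + lam ^ (1/β)))
                ≤ ENNReal.ofReal (lam ^ (1/β)) := by
              calc (volume.restrict (Ioi (0:ℝ))) (Ioc t (t + lam ^ (1/β)))
                  ≤ volume (Ioc t (t + lam ^ (1/β))) := Measure.restrict_le_self _
                _ = ENNReal.ofReal (lam ^ (1/β)) := by
                    rw [Real.volume_Ioc]; ring_nf
            calc ((volume.restrict (Ioi (0:ℝ))) (Ioc t (t + lam ^ (1/β)))).toReal
                ≤ (ENNReal.ofReal (lam ^ (1/β))).toReal :=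
                  ENNReal.toReal_mono ENNReal.ofReal_ne_top h2
              _ = lam ^ (1/β) := ENNReal.toReal_ofReal hA.le
          rw [Real.rpow_sub hl.1, Real.rpow_one]
          calc ((volume.restrict (Ioi (0:ℝ))) (Ioc t (t + lam ^ (1/β)))).toReal
                • (lam⁻¹ * (M * N))
              = ((volume.restrict (Ioi (0:ℝ))) (Ioc t (t + lam ^ (1/β)))).toReal
                * (lam⁻¹ * (M * N)) := by rw [smul_eq_mul]
            _ ≤ lam ^ (1/β) * (lam⁻¹ * (M * N)) := by
                exact mul_le_mul_of_nonneg_right h1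
                  (mul_nonneg (inv_nonneg.2 hl.1.le) (mul_nonneg hM0 hN0))
            _ = M * N * (lam ^ (1/β) / lam) := by ring
  have hnorm_int : Integrable (fun lam => ∫ s in Ioi (0:ℝ), ‖F lam s‖)
      (volume.restrict (Ioo (0:ℝ) ε)) := by
    apply Integrable.mono' (g := fun lam => M * N * lam ^ (1/β - 1))
    · have h := intervalIntegral.intervalIntegrable_rpow'
        (a := 0) (b := ε) (r := 1/β - 1) (by linarith)
      rw [intervalIntegrable_iff_integrableOn_Ioc_of_le hε.le] at h
      exact ((h.mono_set Ioo_subset_Ioc_self).const_mul (M * N))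
    · exact (hFm.norm).integral_prod_right'
    · filter_upwards [ae_restrict_mem measurableSet_Ioo] with lam hl
      rw [Real.norm_eq_abs,
        abs_of_nonneg (integral_nonneg (fun s => norm_nonneg _))]
      exact hbound lam hl
  have hProdInt : Integrable (Function.uncurry F)
      ((volume.restrict (Ioo (0:ℝ) ε)).prod (volume.restrict (Ioi (0:ℝ)))) := by
    rw [integrable_prod_iff hFm]
    refine ⟨?_, hnorm_int⟩
    filter_upwards [ae_restrict_mem measurableSet_Ioo] with lam hl
    exact hslice lam hl.1
  have hswap := integral_integral_swap hProdInt
  -- J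
  set J : ℝ → ℝ := fun s => ∫ lam in Ioo (0:ℝ) ε, lam⁻¹ * ζ ((t - s)/lam ^ (1/β))
    with hJ_def
  have hswap' : (∫ lam in Ioo (0:ℝ) ε, lam⁻¹ *
        ∫ s in Ioi (0:ℝ), deriv v s * ζ ((t - s)/lam ^ (1/β)))
      = ∫ s in Ioi (0:ℝ), deriv v s * J s := by
    calc (∫ lam in Ioo (0:ℝ) ε, lam⁻¹ *
          ∫ s in Ioi (0:ℝ), deriv v s * ζ ((t - s)/lam ^ (1/β)))
        = ∫ lam in Ioo (0:ℝ) ε, ∫ s in Ioi (0:ℝ), F lam s := by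
          apply integral_congr_ae; filter_upwards with lam
          rw [hF_def, ← integral_const_mul]
      _ = ∫ s in Ioi (0:ℝ), ∫ lam in Ioo (0:ℝ) ε, F lam s := hswap
      _ = ∫ s in Ioi (0:ℝ), deriv v s * J s := by
          apply integral_congr_ae; filter_upwards with s
          rw [hJ_def, hF_def, ← integral_const_mul]
          apply integral_congr_ae; filter_upwards with lam
          ring
  -- the H-version of the swapped integral
  have hstepA' : (1/β) * (∫ lam in Ioo (0:ℝ) ε, lam⁻¹ *
        ∫ s in Ioi (0:ℝ), deriv v s * ζ ((t - s)/lam ^ (1/β)))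
      = (∫ s in Ioi (0:ℝ), deriv v s * H ((t - s)/ε ^ (1/β)))
        - ∫ s in Ioi (0:ℝ), indicator (Iic t) (deriv v) s := by
    rw [hswap', ← integral_const_mul]
    have hptw : ∀ s : ℝ, (1/β) * (deriv v s * J s)
        = deriv v s * H ((t - s)/ε ^ (1/β)) - indicator (Iic t) (deriv v) s := by
      intro s
      have := stepA s
      have h2 : (1/β) * (deriv v s * J s) = deriv v s * (β⁻¹ * J s) := by
        rw [one_div]; ring
      rw [h2, this]
      by_cases h : s ≤ t
      · rw [if_pos h, indicator_of_mem (mem_Iic.2 h)]; ring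
      · rw [if_neg h, indicator_of_notMem (fun hc => h (mem_Iic.1 hc))]; ring
    have hInt1 : Integrable (fun s => deriv v s * H ((t - s)/ε ^ (1/β)))
        (volume.restrict (Ioi (0:ℝ))) := by
      apply Integrable.integrableOn
      apply Continuous.integrable_of_hasCompactSupport
      · exact hv'_cont.mul
          (hH_cont.comp ((continuous_const.sub continuous_id).div_const _))
      · exact hv'_cpt.mul_right
    have hInt2 : Integrable (fun s => indicator (Iic t) (deriv v) s)
        (volume.restrict (Ioi (0:ℝ))) := by
      rw [integrable_indicator_iff measurableSet_Iic]
      exact (hv'_cont.integrable_of_hasCompactSupport hv'_cpt).integrableOn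
    calc (∫ s in Ioi (0:ℝ), (1/β) * (deriv v s * J s))
        = ∫ s in Ioi (0:ℝ),
            (deriv v s * H ((t - s)/ε ^ (1/β)) - indicator (Iic t) (deriv v) s) := by
          apply integral_congr_ae; filter_upwards with s using hptw s
      _ = _ := integral_sub hInt1 hInt2
  -- the indicator integral
  have hind : (∫ s in Ioi (0:ℝ), indicator (Iic t) (deriv v) s) = v t - v 0 := by
    rw [integral_indicator measurableSet_Iic,
      Measure.restrict_restrict measurableSet_Iic,
      show Iic t ∩ Ioi (0:ℝ) = Ioc 0 t from by rw [inter_comm, Ioi_inter_Iic],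
      ← intervalIntegral.integral_of_le ht]
    exact intervalIntegral.integral_deriv_eq_sub (fun s _ => hv_diff s)
      (hv'_cont.intervalIntegrable 0 t)
  -- integration by parts on Ioi 0
  have hP' : ∀ s ∈ Ici (0:ℝ), HasDerivAt (fun s' => v s' * H ((t - s')/ε ^ (1/β)))
      (deriv v s * H ((t - s)/ε ^ (1/β))
        + v s * (η ((t - s)/ε ^ (1/β)) * (-1/ε ^ (1/β)))) s := by
    intro s _
    have hinner : HasDerivAt (fun s' : ℝ => (t - s')/ε ^ (1/β)) (-1/ε ^ (1/β)) s := by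
      have h0 : HasDerivAt (fun s' : ℝ => t - s') (-1) s := by
        simpa using (hasDerivAt_id s).const_sub t
      simpa [neg_div] using h0.div_const (ε ^ (1/β))
    exact ((hv_diff s).hasDerivAt).mul ((hH_deriv _).comp s hinner)
  have hP'int : IntegrableOn (fun s => deriv v s * H ((t - s)/ε ^ (1/β))
      + v s * (η ((t - s)/ε ^ (1/β)) * (-1/ε ^ (1/β)))) (Ioi (0:ℝ)) := by
    apply Integrable.integrableOn
    apply Continuous.integrable_of_hasCompactSupport
    · apply Continuous.add
      · exact hv'_cont.mul
          (hH_cont.comp ((continuous_const.sub continuous_id).div_const _))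
      · exact hv_cont.mul
          ((hηc.comp ((continuous_const.sub continuous_id).div_const _)).mul
            continuous_const)
    · exact (hv'_cpt.mul_right).add (hv_cpt.mul_right)
  have htend : Tendsto (fun s' => v s' * H ((t - s')/ε ^ (1/β))) atTop (nhds 0) := by
    obtain ⟨r, hr⟩ := hv_cpt.isBounded.subset_closedBall 0
    have hev : (fun s' => v s' * H ((t - s')/ε ^ (1/β))) =ᶠ[atTop]
        (fun _ => (0:ℝ)) := by
      filter_upwards [eventually_gt_atTop r] with s' hs'
      have hv0 : v s' = 0 := by
        apply image_eq_zero_of_notMem_tsupport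
        intro hmem
        have habs : |s'| ≤ r := by
          have h := hr hmem
          rwa [Metric.mem_closedBall, Real.dist_eq, sub_zero] at h
        linarith [le_abs_self s']
      rw [hv0, zero_mul]
    exact Tendsto.congr' hev.symm tendsto_const_nhds
  have hIBP := integral_Ioi_of_hasDerivAt_of_tendsto' hP' hP'int htend
  have hIntH : Integrable (fun s => deriv v s * H ((t - s)/ε ^ (1/β)))
      (volume.restrict (Ioi (0:ℝ))) := by
    apply Integrable.integrableOn
    apply Continuous.integrable_of_hasCompactSupport
    · exact hv'_cont.mul
        (hH_cont.comp ((continuous_const.sub continuous_id).div_const _))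
    · exact hv'_cpt.mul_right
  have hIntη : Integrable
      (fun s => v s * (η ((t - s)/ε ^ (1/β)) * (-1/ε ^ (1/β))))
      (volume.restrict (Ioi (0:ℝ))) := by
    apply Integrable.integrableOn
    apply Continuous.integrable_of_hasCompactSupport
    · exact hv_cont.mul
        ((hηc.comp ((continuous_const.sub continuous_id).div_const _)).mul
          continuous_const)
    · exact hv_cpt.mul_right
  have hsplit : (∫ s in Ioi (0:ℝ), deriv v s * H ((t - s)/ε ^ (1/β)))
      + (∫ s in Ioi (0:ℝ), v s * (η ((t - s)/ε ^ (1/β)) * (-1/ε ^ (1/β))))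
      = - v 0 := by
    rw [← integral_add hIntH hIntη, hIBP]
    rw [hH1 ((t - 0)/ε ^ (1/β)) (by
      have : (0:ℝ) ≤ (t - 0)/ε ^ (1/β) := div_nonneg (by linarith) hεp.le
      linarith)]
    ring
  have hG : (∫ s in Ioi (0:ℝ), ε ^ (-(1/β)) * η ((t - s) * ε ^ (-(1/β))) * u s x)
      = - ∫ s in Ioi (0:ℝ), v s * (η ((t - s)/ε ^ (1/β)) * (-1/ε ^ (1/β))) := by
    rw [← integral_neg]
    apply integral_congr_ae; filter_upwards with s
    rw [Real.rpow_neg hε.le, show (t - s) * (ε ^ (1/β))⁻¹ = (t - s)/ε ^ (1/β) from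
      (div_eq_mul_inv _ _).symm]
    show (ε ^ (1/β))⁻¹ * η ((t - s)/ε ^ (1/β)) * v s = _
    ring
  have key : (1/β) * (∫ lam in Ioo (0:ℝ) ε, lam⁻¹ *
        ∫ s in Ioi (0:ℝ), deriv v s * ζ ((t - s)/lam ^ (1/β)))
      = (∫ s in Ioi (0:ℝ), ε ^ (-(1/β)) * η ((t - s) * ε ^ (-(1/β))) * u s x)
        - v t := by
    rw [hstepA', hind, hG]
    linarith [hsplit]
  have hfinal : u t x
      = (∫ s in Ioi (0:ℝ), ε ^ (-(1/β)) * η ((t - s) * ε ^ (-(1/β))) * u s x)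
        - (1/β) * (∫ lam in Ioo (0:ℝ) ε, lam⁻¹ *
          ∫ s in Ioi (0:ℝ), deriv v s * ζ ((t - s)/lam ^ (1/β))) := by
    rw [key]
    show v t = _
    ring
  exact hfinal
end
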